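/- arXiv:2404.18908 — 4 statements merged into one kernel-verified Lean document; each statement's English description precedes it below -/
import Mathlib

section
/- Let p > 2 be prime, k ≥ 3, and let a = (a_1,…,a_k), b = (b_1,…,b_k) ∈ 𝔽_p^k satisfy a_i b_j − a_j b_i ≠ 0 for all i ≠ j. For each n, consider the random quantity P(F̂) of the random model. Then E P(F̂) = 0 for every n, and there exist c > 0 and n₀ such that Var P(F̂) ≥ c · p^{2n} for all n ≥ n₀. -/
open Finset MeasureTheory
open scoped Classical

/-- `h ≻ 0` in the lexicographic order on `𝔽_p^n`, identifying `𝔽_p` with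
`{−(p−1)/2, …, (p−1)/2}` via `ZMod.valMinAbs`: the first nonzero coordinate of `h`
is positive. -/
def posLex (p n : ℕ) (h : Fin n → ZMod p) : Prop :=
  ∃ i : Fin n, 0 < (h i).valMinAbs ∧ ∀ j : Fin n, j < i → h j = 0

/-- The probability space for the random model: an i.i.d. family, indexed by
`𝔽_p^n`, of uniform random variables on `[0,1]`; the variable at index `h ≻ 0`
parametrises the uniform point `ξ_h = exp(2πi·ω h)` of the unit circle `S¹`. -/
noncomputable def circMeasure (p n : ℕ) [NeZero p] : Measure ((Fin n → ZMod p) → ℝ) :=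
  Measure.pi (fun _ => volume.restrict (Set.Icc (0 : ℝ) 1))

/-- The random function `F̂ : 𝔽_p^n → ℂ`: for `h ≻ 0`, `F̂(h) = ξ_h` is uniform on `S¹`
(independently for different `h`), `F̂(−h) = conj(F̂(h))`, and `F̂(0) = 0`. -/
noncomputable def Fhat (p n : ℕ) (ω : (Fin n → ZMod p) → ℝ) (h : Fin n → ZMod p) : ℂ :=
  if posLex p n h then Complex.exp (2 * Real.pi * Complex.I * (ω h))
  else if posLex p n (-h) then Complex.exp (-(2 * Real.pi * Complex.I * (ω (-h))))
  else 0

/-- `P(F̂) = ∑_{(r,s) linearly independent} ∏_{i=1}^k F̂(a_i r + b_i s)`. -/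
noncomputable def Pstat (p n k : ℕ) [NeZero p] (a b : Fin k → ZMod p)
    (ω : (Fin n → ZMod p) → ℝ) : ℂ :=
  ∑ rs : (Fin n → ZMod p) × (Fin n → ZMod p),
    if LinearIndependent (ZMod p) ![rs.1, rs.2] then
      ∏ i, Fhat p n ω (a i • rs.1 + b i • rs.2)
    else 0

/-- trichotomy -/
lemma posLex_of_ne_zero {p n : ℕ} (hodd : Odd p) {h : Fin n → ZMod p} (hh : h ≠ 0) :
    posLex p n h ∨ posLex p n (-h) := by
  have hex : ∃ i, h i ≠ 0 := by
    by_contra hc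
    push_neg at hc
    exact hh (funext hc)
  have hS : (Finset.univ.filter (fun i => h i ≠ 0)).Nonempty := by
    obtain ⟨i, hi⟩ := hex
    exact ⟨i, by simp [hi]⟩
  set i₀ := (Finset.univ.filter (fun i => h i ≠ 0)).min' hS with hi₀
  have hmem : h i₀ ≠ 0 := by
    have := Finset.min'_mem _ hS
    simpa using this
  have hmin : ∀ j : Fin n, j < i₀ → h j = 0 := by
    intro j hj
    by_contra hc
    have : i₀ ≤ j := Finset.min'_le _ _ (by simp [hc])
    exact absurd (lt_of_le_of_lt this hj) (lt_irrefl _)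
  have hv : (h i₀).valMinAbs ≠ 0 := by
    simpa [ZMod.valMinAbs_eq_zero] using hmem
  rcases lt_or_gt_of_ne hv with hlt | hgt
  · right
    refine ⟨i₀, ?_, fun j hj => by simp [hmin j hj]⟩
    have hne : 2 * (h i₀).val ≠ p := by
      intro hc
      rcases hodd with ⟨m, hm⟩
      omega
    have := ZMod.valMinAbs_neg_of_ne_half hne
    simp only [Pi.neg_apply, this]
    omega
  · exact Or.inl ⟨i₀, hgt, hmin⟩

noncomputable def Eexp {p n : ℕ} [NeZero p] (m : (Fin n → ZMod p) → ℤ) (ω : (Fin n → ZMod p) → ℝ) : ℂ :=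
  Complex.exp (2 * Real.pi * Complex.I * ((∑ g, (m g : ℝ) * ω g : ℝ) : ℂ))

lemma Eexp_norm {p n : ℕ} [NeZero p] (m : (Fin n → ZMod p) → ℤ) (ω : (Fin n → ZMod p) → ℝ) :
    ‖Eexp m ω‖ = 1 := by
  unfold Eexp
  rw [show (2 * (Real.pi : ℂ) * Complex.I * ((∑ g, (m g : ℝ) * ω g : ℝ) : ℂ))
      = ((2 * Real.pi * (∑ g, (m g : ℝ) * ω g) : ℝ) : ℂ) * Complex.I by push_cast; ring]
  rw [Complex.norm_exp_ofReal_mul_I]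

lemma Eexp_mul {p n : ℕ} [NeZero p] (m m' : (Fin n → ZMod p) → ℤ) (ω : (Fin n → ZMod p) → ℝ) :
    Eexp m ω * Eexp m' ω = Eexp (m + m') ω := by
  unfold Eexp
  rw [← Complex.exp_add]
  congr 1
  have : (∑ g, ((m + m') g : ℝ) * ω g) = (∑ g, (m g : ℝ) * ω g) + ∑ g, (m' g : ℝ) * ω g := by
    rw [← Finset.sum_add_distrib]
    refine Finset.sum_congr rfl fun g _ => ?_
    push_cast [Pi.add_apply]
    ring
  rw [this]
  push_cast
  ring

lemma Eexp_conj {p n : ℕ} [NeZero p] (m : (Fin n → ZMod p) → ℤ) (ω : (Fin n → ZMod p) → ℝ) :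
    (starRingEnd ℂ) (Eexp m ω) = Eexp (-m) ω := by
  unfold Eexp
  rw [← Complex.exp_conj]
  congr 1
  have : (∑ g, ((-m) g : ℝ) * ω g) = -∑ g, (m g : ℝ) * ω g := by
    rw [← Finset.sum_neg_distrib]
    refine Finset.sum_congr rfl fun g _ => ?_
    push_cast [Pi.neg_apply]
    ring
  rw [this]
  simp only [map_mul, Complex.conj_I, Complex.conj_ofReal, map_ofNat]
  push_cast
  ring

lemma Eexp_prod {p n : ℕ} [NeZero p] {ι : Type*} (s : Finset ι) (m : ι → (Fin n → ZMod p) → ℤ)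
    (ω : (Fin n → ZMod p) → ℝ) :
    ∏ i ∈ s, Eexp (m i) ω = Eexp (∑ i ∈ s, m i) ω := by
  induction s using Finset.cons_induction with
  | empty => simp [Eexp]
  | cons a s ha ih =>
    rw [Finset.prod_cons, Finset.sum_cons, ih, Eexp_mul]

noncomputable def coef (p n : ℕ) (h : Fin n → ZMod p) : (Fin n → ZMod p) → ℤ := fun g =>
  if posLex p n h then (if g = h then 1 else 0)
  else if posLex p n (-h) then (if g = -h then -1 else 0)
  else 0

lemma coef_apply_ne {p n : ℕ} (h g : Fin n → ZMod p) (hg1 : g ≠ h) (hg2 : g ≠ -h) :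
    coef p n h g = 0 := by
  unfold coef
  split_ifs <;> simp_all

lemma coef_self {p n : ℕ} (hodd : Odd p) (h : Fin n → ZMod p) (hh : h ≠ 0) :
    coef p n h (if posLex p n h then h else -h) ≠ 0 := by
  unfold coef
  by_cases hpl : posLex p n h
  · simp [hpl]
  · have hpl2 : posLex p n (-h) := (posLex_of_ne_zero hodd hh).resolve_left hpl
    simp [hpl, hpl2]

lemma Fhat_eq_Eexp {p n : ℕ} [NeZero p] (hodd : Odd p) (ω : (Fin n → ZMod p) → ℝ)
    (h : Fin n → ZMod p) (hh : h ≠ 0) :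
    Fhat p n ω h = Eexp (coef p n h) ω := by
  unfold Fhat Eexp coef
  by_cases hpl : posLex p n h
  · simp only [hpl, if_true]
    congr 1
    have : (∑ g, (((if g = h then (1:ℤ) else 0) : ℤ) : ℝ) * ω g) = ω h := by
      simp [ite_mul, Finset.sum_ite_eq', apply_ite (fun z : ℤ => (z : ℝ))]
    rw [this]
  · have hpl2 : posLex p n (-h) := (posLex_of_ne_zero hodd hh).resolve_left hpl
    simp only [hpl, hpl2, if_true, if_false]
    congr 1
    have : (∑ g, (((if g = -h then (-1:ℤ) else 0) : ℤ) : ℝ) * ω g) = -(ω (-h)) := by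
      simp [ite_mul, Finset.sum_ite_eq', apply_ite (fun z : ℤ => (z : ℝ))]
    rw [this]
    push_cast
    ring

instance circProb (p n : ℕ) [NeZero p] : IsProbabilityMeasure (circMeasure p n) := by
  have : IsProbabilityMeasure ((volume : Measure ℝ).restrict (Set.Icc 0 1)) := by
    constructor
    simp
  unfold circMeasure
  infer_instance

lemma integral_single (c : ℤ) :
    ∫ x : ℝ, Complex.exp (2 * Real.pi * Complex.I * (c : ℂ) * (x : ℂ))
      ∂((volume : Measure ℝ).restrict (Set.Icc 0 1)) = if c = 0 then 1 else 0 := by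
  by_cases hc : c = 0
  · subst hc
    simp
  · rw [if_neg hc]
    have h01 : (0:ℝ) ≤ 1 := zero_le_one
    rw [MeasureTheory.integral_Icc_eq_integral_Ioc, ← intervalIntegral.integral_of_le h01]
    have hc' : (2 * Real.pi * Complex.I * (c : ℂ)) ≠ 0 := by
      simp [Real.pi_ne_zero, Complex.I_ne_zero, hc]
    rw [show (fun x : ℝ => Complex.exp (2 * Real.pi * Complex.I * (c:ℂ) * (x:ℂ)))
        = fun x : ℝ => Complex.exp ((2 * Real.pi * Complex.I * (c:ℂ)) * (x:ℂ)) from rfl]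
    rw [integral_exp_mul_complex hc']
    have h1 : Complex.exp (2 * Real.pi * Complex.I * (c:ℂ) * (1:ℝ)) = 1 := by
      rw [show (2 * (Real.pi:ℂ) * Complex.I * (c:ℂ) * ((1:ℝ):ℂ)) = (c:ℂ) * (2 * Real.pi * Complex.I) by
        push_cast; ring]
      exact Complex.exp_int_mul_two_pi_mul_I c
    have h0 : Complex.exp (2 * Real.pi * Complex.I * (c:ℂ) * ((0:ℝ):ℂ)) = 1 := by
      norm_num
    rw [h1, h0]
    simp

lemma integral_Eexp {p n : ℕ} [NeZero p] (m : (Fin n → ZMod p) → ℤ) :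
    ∫ ω, Eexp m ω ∂(circMeasure p n) = if m = 0 then 1 else 0 := by
  set f : (Fin n → ZMod p) → ℝ → ℂ :=
    fun g x => Complex.exp (2 * Real.pi * Complex.I * (m g : ℂ) * (x : ℂ)) with hf
  have hfac : ∀ ω : (Fin n → ZMod p) → ℝ, Eexp m ω = ∏ g, f g (ω g) := by
    intro ω
    unfold Eexp
    have harg : (2 * (Real.pi:ℂ) * Complex.I * ((∑ g, (m g : ℝ) * ω g : ℝ) : ℂ))
        = ∑ g, 2 * (Real.pi:ℂ) * Complex.I * (m g : ℂ) * ((ω g : ℝ) : ℂ) := by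
      push_cast [Finset.mul_sum]
      exact Finset.sum_congr rfl fun g _ => by ring
    rw [harg, Complex.exp_sum]
  have hSF : SigmaFinite ((volume : Measure ℝ).restrict (Set.Icc (0:ℝ) 1)) := inferInstance
  have key : ∫ ω : (Fin n → ZMod p) → ℝ, (∏ g, f g (ω g)) ∂(circMeasure p n)
      = ∏ g, ∫ x : ℝ, f g x ∂((volume : Measure ℝ).restrict (Set.Icc (0:ℝ) 1)) := by
    letI : MeasureSpace ℝ := ⟨(volume : Measure ℝ).restrict (Set.Icc (0:ℝ) 1)⟩
    haveI : SigmaFinite (volume : Measure ℝ) := hSF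
    exact MeasureTheory.integral_fintype_prod_eq_prod f
  rw [MeasureTheory.integral_congr_ae (Filter.Eventually.of_forall hfac), key]
  have hsing : ∀ g : Fin n → ZMod p,
      (∫ x : ℝ, f g x ∂((volume : Measure ℝ).restrict (Set.Icc (0:ℝ) 1)))
        = if m g = 0 then 1 else 0 := fun g => integral_single (m g)
  rw [Finset.prod_congr rfl fun g _ => hsing g]
  by_cases hm : m = 0
  · simp [hm]
  · rw [if_neg hm]
    have : ∃ g, m g ≠ 0 := by
      by_contra hc
      push_neg at hc
      exact hm (funext hc)
    obtain ⟨g, hg⟩ := this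
    exact Finset.prod_eq_zero (Finset.mem_univ g) (by simp [hg])

lemma Eexp_continuous {p n : ℕ} [NeZero p] (m : (Fin n → ZMod p) → ℤ) :
    Continuous (Eexp m : ((Fin n → ZMod p) → ℝ) → ℂ) := by
  unfold Eexp
  refine Complex.continuous_exp.comp (Continuous.mul continuous_const ?_)
  refine Complex.continuous_ofReal.comp ?_
  exact continuous_finset_sum _ fun g _ => continuous_const.mul (continuous_apply g)

lemma Eexp_integrable {p n : ℕ} [NeZero p] (m : (Fin n → ZMod p) → ℤ) :
    Integrable (Eexp m) (circMeasure p n) := by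
  refine Integrable.mono' (integrable_const 1) ((Eexp_continuous m).aestronglyMeasurable) ?_
  exact Filter.Eventually.of_forall fun ω => le_of_eq (Eexp_norm m ω)

section Alg
variable {p n k : ℕ} [NeZero p] {a b : Fin k → ZMod p}

/-- pairs of coefficient vectors give distinct, non-opposite, nonzero combos -/
lemma combo_ne_zero (hk : 3 ≤ k)
    (hminors : ∀ i j : Fin k, i ≠ j → a i * b j - a j * b i ≠ 0)
    {r s : Fin n → ZMod p} (hrs : LinearIndependent (ZMod p) ![r, s]) (i : Fin k) :
    a i • r + b i • s ≠ 0 := by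
  have key := LinearIndependent.pair_iff.1 hrs
  intro hzero
  obtain ⟨ha, hb⟩ := key _ _ hzero
  have : ∃ j : Fin k, j ≠ i := by
    refine ⟨if h : i = ⟨0, by omega⟩ then ⟨1, by omega⟩ else ⟨0, by omega⟩, ?_⟩
    split_ifs with h
    · subst h; intro hc; simp [Fin.ext_iff] at hc
    · intro hc; exact h hc.symm
  obtain ⟨j, hj⟩ := this
  exact hminors i j (Ne.symm hj) (by rw [ha, hb]; ring)

lemma combo_ne (hminors : ∀ i j : Fin k, i ≠ j → a i * b j - a j * b i ≠ 0)
    {r s : Fin n → ZMod p} (hrs : LinearIndependent (ZMod p) ![r, s])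
    {i j : Fin k} (hij : i ≠ j) :
    a i • r + b i • s ≠ a j • r + b j • s := by
  have key := LinearIndependent.pair_iff.1 hrs
  intro heq
  have : (a i - a j) • r + (b i - b j) • s = 0 := by
    rw [sub_smul, sub_smul]
    rw [show a i • r - a j • r + (b i • s - b j • s)
        = (a i • r + b i • s) - (a j • r + b j • s) by abel, heq, sub_self]
  obtain ⟨ha, hb⟩ := key _ _ this
  have ha' : a i = a j := by rwa [sub_eq_zero] at ha
  have hb' : b i = b j := by rwa [sub_eq_zero] at hb
  exact hminors i j hij (by rw [ha', hb']; ring)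

lemma combo_ne_neg (hminors : ∀ i j : Fin k, i ≠ j → a i * b j - a j * b i ≠ 0)
    {r s : Fin n → ZMod p} (hrs : LinearIndependent (ZMod p) ![r, s])
    {i j : Fin k} (hij : i ≠ j) :
    a i • r + b i • s ≠ -(a j • r + b j • s) := by
  have key := LinearIndependent.pair_iff.1 hrs
  intro heq
  have : (a i + a j) • r + (b i + b j) • s = 0 := by
    rw [add_smul, add_smul]
    rw [show a i • r + a j • r + (b i • s + b j • s)
        = (a i • r + b i • s) + (a j • r + b j • s) by abel, heq]
    abel
  obtain ⟨ha, hb⟩ := key _ _ this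
  have ha' : a i = -a j := by linear_combination ha
  have hb' : b i = -b j := by linear_combination hb
  exact hminors i j hij (by rw [ha', hb']; ring)

end Alg

noncomputable def mvec (p n k : ℕ) (a b : Fin k → ZMod p)
    (rs : (Fin n → ZMod p) × (Fin n → ZMod p)) : (Fin n → ZMod p) → ℤ :=
  ∑ i : Fin k, coef p n (a i • rs.1 + b i • rs.2)

lemma prod_Fhat_eq {p n k : ℕ} [NeZero p] (hodd : Odd p) (hk : 3 ≤ k)
    {a b : Fin k → ZMod p}
    (hminors : ∀ i j : Fin k, i ≠ j → a i * b j - a j * b i ≠ 0)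
    {rs : (Fin n → ZMod p) × (Fin n → ZMod p)}
    (hrs : LinearIndependent (ZMod p) ![rs.1, rs.2]) (ω : (Fin n → ZMod p) → ℝ) :
    (∏ i, Fhat p n ω (a i • rs.1 + b i • rs.2)) = Eexp (mvec p n k a b rs) ω := by
  rw [Finset.prod_congr rfl fun i _ =>
    Fhat_eq_Eexp hodd ω _ (combo_ne_zero hk hminors hrs i)]
  exact Eexp_prod _ _ _

lemma mvec_ne_zero {p n k : ℕ} [NeZero p] (hodd : Odd p) (hk : 3 ≤ k)
    {a b : Fin k → ZMod p}
    (hminors : ∀ i j : Fin k, i ≠ j → a i * b j - a j * b i ≠ 0)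
    {rs : (Fin n → ZMod p) × (Fin n → ZMod p)}
    (hrs : LinearIndependent (ZMod p) ![rs.1, rs.2]) :
    mvec p n k a b rs ≠ 0 := by
  have h3 : 0 < k := by omega
  set i₀ : Fin k := ⟨0, h3⟩ with hi₀
  set h₀ : Fin n → ZMod p := a i₀ • rs.1 + b i₀ • rs.2 with hh₀
  set g₀ : Fin n → ZMod p := if posLex p n h₀ then h₀ else -h₀ with hg₀
  have hg₀mem : g₀ = h₀ ∨ g₀ = -h₀ := by
    rw [hg₀]; split_ifs <;> simp
  intro hzero
  have happ : mvec p n k a b rs g₀ = 0 := by rw [hzero]; rfl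
  rw [mvec, Finset.sum_apply] at happ
  rw [Finset.sum_eq_single i₀ ?_ (by simp)] at happ
  · exact absurd happ (by rw [← hg₀] at *; exact coef_self hodd h₀ (combo_ne_zero hk hminors hrs i₀))
  · intro j _ hj
    have e1 : h₀ ≠ a j • rs.1 + b j • rs.2 := combo_ne hminors hrs (Ne.symm hj)
    have e2 : h₀ ≠ -(a j • rs.1 + b j • rs.2) := combo_ne_neg hminors hrs (Ne.symm hj)
    refine coef_apply_ne _ _ ?_ ?_ <;> rcases hg₀mem with h | h <;> rw [h]
    · exact e1
    · exact fun hc => e2 (neg_eq_iff_eq_neg.1 hc)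
    · exact e2
    · exact fun hc => e1 (neg_inj.1 hc)

section Main
variable {p n k : ℕ} [NeZero p] {a b : Fin k → ZMod p}

lemma term_eq (hodd : Odd p) (hk : 3 ≤ k)
    (hminors : ∀ i j : Fin k, i ≠ j → a i * b j - a j * b i ≠ 0)
    (rs : (Fin n → ZMod p) × (Fin n → ZMod p)) :
    (fun ω => if LinearIndependent (ZMod p) ![rs.1, rs.2] then
        ∏ i, Fhat p n ω (a i • rs.1 + b i • rs.2) else 0)
      = fun ω => if LinearIndependent (ZMod p) ![rs.1, rs.2] then
        Eexp (mvec p n k a b rs) ω else 0 := by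
  funext ω
  by_cases hrs : LinearIndependent (ZMod p) ![rs.1, rs.2]
  · rw [if_pos hrs, if_pos hrs, prod_Fhat_eq hodd hk hminors hrs]
  · rw [if_neg hrs, if_neg hrs]

lemma term_integrable (hodd : Odd p) (hk : 3 ≤ k)
    (hminors : ∀ i j : Fin k, i ≠ j → a i * b j - a j * b i ≠ 0)
    (rs : (Fin n → ZMod p) × (Fin n → ZMod p)) :
    Integrable (fun ω => if LinearIndependent (ZMod p) ![rs.1, rs.2] then
        ∏ i, Fhat p n ω (a i • rs.1 + b i • rs.2) else 0) (circMeasure p n) := by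
  rw [term_eq hodd hk hminors]
  by_cases hrs : LinearIndependent (ZMod p) ![rs.1, rs.2]
  · simpa [hrs] using Eexp_integrable (mvec p n k a b rs)
  · simpa [hrs] using integrable_zero _ _ (circMeasure p n)

lemma expectation_zero (hodd : Odd p) (hk : 3 ≤ k)
    (hminors : ∀ i j : Fin k, i ≠ j → a i * b j - a j * b i ≠ 0) :
    ∫ ω, Pstat p n k a b ω ∂(circMeasure p n) = 0 := by
  unfold Pstat
  rw [MeasureTheory.integral_finset_sum _ fun rs _ => term_integrable hodd hk hminors rs]
  refine Finset.sum_eq_zero fun rs _ => ?_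
  rw [term_eq hodd hk hminors]
  by_cases hrs : LinearIndependent (ZMod p) ![rs.1, rs.2]
  · simp only [hrs, if_true]
    rw [integral_Eexp, if_neg (mvec_ne_zero hodd hk hminors hrs)]
  · simp [hrs]

end Main

section Count
variable {p n : ℕ} [NeZero p]

lemma exists_slope {x y : Fin n → ZMod p} (hp : p.Prime) (hx : x ≠ 0)
    (hdep : ¬ LinearIndependent (ZMod p) ![x, y]) : ∃ t : ZMod p, y = t • x := by
  haveI : Fact p.Prime := ⟨hp⟩
  rw [LinearIndependent.pair_iff] at hdep
  push_neg at hdep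
  obtain ⟨c, d, hcd, hne⟩ := hdep
  by_cases hd : d = 0
  · subst hd
    simp only [zero_smul, add_zero, smul_eq_zero] at hcd
    rcases hcd with hc | hx'
    · exact absurd (hne hc) (by simp)
    · exact absurd hx' hx
  · refine ⟨-(d⁻¹ * c), ?_⟩
    have : d • y = -(c • x) := by
      rw [eq_neg_iff_add_eq_zero, add_comm]
      exact hcd
    have := congrArg (fun z => d⁻¹ • z) this
    simp only [smul_smul, inv_mul_cancel₀ hd, one_smul, smul_neg] at this
    rw [this, neg_smul]

lemma card_dep_le (hp : p.Prime) :
    (Finset.univ.filter fun u : (Fin n → ZMod p) × (Fin n → ZMod p) =>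
        ¬ LinearIndependent (ZMod p) ![u.1, u.2]).card ≤ p ^ n + p ^ n * p := by
  set V := Fin n → ZMod p
  have hcV : Fintype.card V = p ^ n := by
    simp [V, Fintype.card_fun, ZMod.card]
  set f : V × V → V ⊕ (V × ZMod p) := fun u =>
    if u.1 = 0 then Sum.inl u.2
    else Sum.inr (u.1, if h : ∃ t : ZMod p, u.2 = t • u.1 then h.choose else 0) with hfdef
  have hmaps : ∀ u ∈ (Finset.univ.filter fun u : V × V =>
      ¬ LinearIndependent (ZMod p) ![u.1, u.2]), f u ∈ (Finset.univ : Finset (V ⊕ (V × ZMod p))) :=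
    fun u _ => Finset.mem_univ _
  have hspec : ∀ u : V × V, u.1 ≠ 0 → ¬ LinearIndependent (ZMod p) ![u.1, u.2] →
      u.2 = (if h : ∃ t : ZMod p, u.2 = t • u.1 then h.choose else 0) • u.1 := by
    intro u hu hdep
    have hex := exists_slope hp hu hdep
    rw [dif_pos hex]
    exact hex.choose_spec
  have hinj : Set.InjOn f ((Finset.univ.filter fun u : V × V =>
      ¬ LinearIndependent (ZMod p) ![u.1, u.2]) : Set (V × V)) := by
    intro u hu v hv huv
    simp only [Finset.coe_filter, Set.mem_setOf_eq] at hu hv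
    by_cases hu1 : u.1 = 0 <;> by_cases hv1 : v.1 = 0
    · simp only [hfdef, hu1, hv1, if_pos rfl] at huv
      rw [Prod.ext_iff]
      exact ⟨hu1.trans hv1.symm, Sum.inl.inj huv⟩
    · simp only [hfdef, hu1, hv1, if_pos, if_neg hv1] at huv
      exact absurd huv (by simp)
    · simp only [hfdef, hu1, hv1, if_pos, if_neg hu1] at huv
      exact absurd huv (by simp)
    · simp only [hfdef, if_neg hu1, if_neg hv1, Sum.inr.injEq, Prod.mk.injEq] at huv
      obtain ⟨h1, h2⟩ := huv
      have e1 := hspec u hu1 hu.2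
      have e2 := hspec v hv1 hv.2
      rw [Prod.ext_iff]
      refine ⟨h1, ?_⟩
      rw [e1, e2, h2, h1]
  have := Finset.card_le_card_of_injOn f hmaps hinj
  calc _ ≤ (Finset.univ : Finset (V ⊕ (V × ZMod p))).card := this
    _ = p ^ n + p ^ n * p := by
      simp [Finset.card_univ, Fintype.card_sum, Fintype.card_prod, hcV, ZMod.card]

lemma card_indep_ge (hp : p.Prime) (hp2 : 2 < p) (hn : 3 ≤ n) :
    p ^ (2 * n) ≤ 2 * (Finset.univ.filter fun u : (Fin n → ZMod p) × (Fin n → ZMod p) =>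
        LinearIndependent (ZMod p) ![u.1, u.2]).card := by
  have hnot : (Finset.univ.filter fun u : ((Fin n → ZMod p) × (Fin n → ZMod p)) => ¬ LinearIndependent (ZMod p) ![u.1, u.2])
      = Finset.univ \ (Finset.univ.filter fun u : ((Fin n → ZMod p) × (Fin n → ZMod p)) => LinearIndependent (ZMod p) ![u.1, u.2]) :=
    Finset.filter_not _ _
  have hsub : (Finset.univ.filter fun u : ((Fin n → ZMod p) × (Fin n → ZMod p)) => LinearIndependent (ZMod p) ![u.1, u.2]) ⊆ Finset.univ :=
    Finset.filter_subset _ _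
  have hsplit : (Finset.univ.filter fun u : ((Fin n → ZMod p) × (Fin n → ZMod p)) => ¬ LinearIndependent (ZMod p) ![u.1, u.2]).card
      = (Finset.univ : Finset ((Fin n → ZMod p) × (Fin n → ZMod p))).card
        - (Finset.univ.filter fun u : ((Fin n → ZMod p) × (Fin n → ZMod p)) => LinearIndependent (ZMod p) ![u.1, u.2]).card := by
    rw [hnot, Finset.card_sdiff_of_subset hsub]
  have hle : (Finset.univ.filter fun u : ((Fin n → ZMod p) × (Fin n → ZMod p)) => LinearIndependent (ZMod p) ![u.1, u.2]).card
      ≤ (Finset.univ : Finset ((Fin n → ZMod p) × (Fin n → ZMod p))).card := Finset.card_le_card hsub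
  have hcard : (Finset.univ : Finset ((Fin n → ZMod p) × (Fin n → ZMod p))).card = p ^ (2 * n) := by
    have hV : Fintype.card (Fin n → ZMod p) = p ^ n := by simp [Fintype.card_fun, ZMod.card]
    simp only [Finset.card_univ, Fintype.card_prod, hV]
    rw [← pow_add, two_mul]
  have hdep := card_dep_le (n := n) hp
  have hnum : 2 * (p ^ n + p ^ n * p) ≤ p ^ (2 * n) := by
    have h1 : p ^ n + p ^ n * p ≤ 2 * p ^ (n + 1) := by
      rw [pow_succ]
      nlinarith [pow_pos (by omega : 0 < p) n]
    have h2 : 4 * p ^ (n + 1) ≤ p ^ (n + 3) := by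
      have hq : p ^ (n + 3) = p ^ (n + 1) * (p * p) := by ring
      have hpp : 9 ≤ p * p := Nat.mul_le_mul hp2 hp2
      have hApos : 0 < p ^ (n + 1) := pow_pos (by omega) _
      rw [hq]
      nlinarith
    have h3 : p ^ (n + 3) ≤ p ^ (2 * n) := Nat.pow_le_pow_right (by omega) (by omega)
    omega
  omega

end Count

section Second
variable {p n k : ℕ} [NeZero p] {a b : Fin k → ZMod p}

lemma second_moment (hp : p.Prime) (hp2 : 2 < p) (hodd : Odd p) (hk : 3 ≤ k)
    (hminors : ∀ i j : Fin k, i ≠ j → a i * b j - a j * b i ≠ 0) (hn : 3 ≤ n) :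
    (1 / 2 : ℝ) * (p : ℝ) ^ (2 * n) ≤ ∫ ω, ‖Pstat p n k a b ω‖ ^ 2 ∂(circMeasure p n) := by
  set V := (Fin n → ZMod p) × (Fin n → ZMod p) with hV
  set t : V → ((Fin n → ZMod p) → ℝ) → ℂ := fun u ω =>
    if LinearIndependent (ZMod p) ![u.1, u.2] then Eexp (mvec p n k a b u) ω else 0 with ht
  have hP : ∀ ω, Pstat p n k a b ω = ∑ u : V, t u ω := by
    intro ω
    unfold Pstat
    exact Finset.sum_congr rfl fun u _ => congrFun (term_eq hodd hk hminors u) ω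
  set F : V → V → ((Fin n → ZMod p) → ℝ) → ℂ := fun u v ω =>
    if LinearIndependent (ZMod p) ![u.1, u.2] ∧ LinearIndependent (ZMod p) ![v.1, v.2] then
      Eexp (mvec p n k a b u - mvec p n k a b v) ω else 0 with hF
  have hcross : ∀ (u v : V) (ω), t u ω * (starRingEnd ℂ) (t v ω) = F u v ω := by
    intro u v ω
    by_cases hu : LinearIndependent (ZMod p) ![u.1, u.2] <;>
      by_cases hv : LinearIndependent (ZMod p) ![v.1, v.2] <;>
      simp only [ht, hF, hu, hv, if_true, if_false, true_and, false_and, and_false, and_true,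
        map_zero, mul_zero, zero_mul]
    rw [Eexp_conj, Eexp_mul, sub_eq_add_neg]
  have hFint : ∀ u v : V, Integrable (F u v) (circMeasure p n) := by
    intro u v
    by_cases h : LinearIndependent (ZMod p) ![u.1, u.2] ∧ LinearIndependent (ZMod p) ![v.1, v.2]
    · simpa [hF, h] using Eexp_integrable (mvec p n k a b u - mvec p n k a b v)
    · simpa [hF, h] using integrable_zero _ _ (circMeasure p n)
  have hQ : ∀ ω, ((‖Pstat p n k a b ω‖ ^ 2 : ℝ) : ℂ) = ∑ u : V, ∑ v : V, F u v ω := by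
    intro ω
    have h1 : ((‖Pstat p n k a b ω‖ ^ 2 : ℝ) : ℂ)
        = Pstat p n k a b ω * (starRingEnd ℂ) (Pstat p n k a b ω) := by
      rw [Complex.mul_conj]
      norm_cast
      rw [← Complex.sq_norm]
    rw [h1, hP, map_sum, Finset.sum_mul_sum]
    exact Finset.sum_congr rfl fun u _ => Finset.sum_congr rfl fun v _ => hcross u v ω
  have hint : ((∫ ω, ‖Pstat p n k a b ω‖ ^ 2 ∂(circMeasure p n) : ℝ) : ℂ)
      = ∑ u : V, ∑ v : V,
        (if LinearIndependent (ZMod p) ![u.1, u.2] ∧ LinearIndependent (ZMod p) ![v.1, v.2] then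
          (if mvec p n k a b u = mvec p n k a b v then (1:ℂ) else 0) else 0) := by
    rw [show ((∫ ω, ‖Pstat p n k a b ω‖ ^ 2 ∂(circMeasure p n) : ℝ) : ℂ)
        = ∫ ω, ((‖Pstat p n k a b ω‖ ^ 2 : ℝ) : ℂ) ∂(circMeasure p n) from
        (integral_ofReal (𝕜 := ℂ)).symm,
      MeasureTheory.integral_congr_ae (Filter.Eventually.of_forall hQ),
      MeasureTheory.integral_finset_sum _ (fun u _ => integrable_finset_sum _ fun v _ => hFint u v)]
    refine Finset.sum_congr rfl fun u _ => ?_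
    rw [MeasureTheory.integral_finset_sum _ (fun v _ => hFint u v)]
    refine Finset.sum_congr rfl fun v _ => ?_
    by_cases h : LinearIndependent (ZMod p) ![u.1, u.2] ∧ LinearIndependent (ZMod p) ![v.1, v.2]
    · simp only [hF, h.1, h.2, and_self, if_true]
      rw [integral_Eexp]
      congr 1
      simp [sub_eq_zero]
    · simp [hF, h]
  have hre : ∫ ω, ‖Pstat p n k a b ω‖ ^ 2 ∂(circMeasure p n)
      = ∑ u : V, ∑ v : V,
        (if LinearIndependent (ZMod p) ![u.1, u.2] ∧ LinearIndependent (ZMod p) ![v.1, v.2] then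
          (if mvec p n k a b u = mvec p n k a b v then (1:ℝ) else 0) else 0) := by
    have := congrArg Complex.re hint
    rw [Complex.ofReal_re] at this
    rw [this, Complex.re_sum]
    refine Finset.sum_congr rfl fun u _ => ?_
    rw [Complex.re_sum]
    refine Finset.sum_congr rfl fun v _ => ?_
    by_cases h : LinearIndependent (ZMod p) ![u.1, u.2] ∧ LinearIndependent (ZMod p) ![v.1, v.2] <;>
      by_cases h2 : mvec p n k a b u = mvec p n k a b v <;>
      simp [h, h2]
  rw [hre]
  have hdiag : ∀ u : V,
      (if LinearIndependent (ZMod p) ![u.1, u.2] then (1:ℝ) else 0)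
        ≤ ∑ v : V,
        (if LinearIndependent (ZMod p) ![u.1, u.2] ∧ LinearIndependent (ZMod p) ![v.1, v.2] then
          (if mvec p n k a b u = mvec p n k a b v then (1:ℝ) else 0) else 0) := by
    intro u
    have h1 : (if LinearIndependent (ZMod p) ![u.1, u.2] then (1:ℝ) else 0)
        = (if LinearIndependent (ZMod p) ![u.1, u.2] ∧ LinearIndependent (ZMod p) ![u.1, u.2] then
          (if mvec p n k a b u = mvec p n k a b u then (1:ℝ) else 0) else 0) := by
      split_ifs <;> simp_all
    rw [h1]
    refine Finset.single_le_sum (f := fun v : V =>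
      (if LinearIndependent (ZMod p) ![u.1, u.2] ∧ LinearIndependent (ZMod p) ![v.1, v.2] then
        (if mvec p n k a b u = mvec p n k a b v then (1:ℝ) else 0) else 0)) ?_ (Finset.mem_univ u)
    intro v _
    split_ifs <;> norm_num
  have hlow : (((Finset.univ.filter fun u : V =>
        LinearIndependent (ZMod p) ![u.1, u.2]).card : ℝ))
      ≤ ∑ u : V, ∑ v : V,
        (if LinearIndependent (ZMod p) ![u.1, u.2] ∧ LinearIndependent (ZMod p) ![v.1, v.2] then
          (if mvec p n k a b u = mvec p n k a b v then (1:ℝ) else 0) else 0) := by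
    calc (((Finset.univ.filter fun u : V => LinearIndependent (ZMod p) ![u.1, u.2]).card : ℝ))
        = ∑ u : V, (if LinearIndependent (ZMod p) ![u.1, u.2] then (1:ℝ) else 0) := by
          rw [Finset.sum_boole]
      _ ≤ _ := Finset.sum_le_sum fun u _ => hdiag u
  refine le_trans ?_ hlow
  have hge := card_indep_ge (p := p) (n := n) hp hp2 hn
  have : ((p : ℝ) ^ (2 * n))
      ≤ 2 * (((Finset.univ.filter fun u : V => LinearIndependent (ZMod p) ![u.1, u.2]).card : ℝ)) := by
    have := (Nat.cast_le (α := ℝ)).2 hge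
    push_cast at this ⊢
    convert this using 2
  linarith

end Second

/-- Let `p > 2` be prime, `k ≥ 3`, and let the rows `a, b` have all `2 × 2` minors
nonzero. Then `E P(F̂) = 0` for every `n`, and there are `c > 0` and `n₀` with
`Var P(F̂) = E |P(F̂)|² ≥ c · p^{2n}` for all `n ≥ n₀`. -/
theorem stmt5 (p k : ℕ) [NeZero p] (hp : p.Prime) (hp2 : 2 < p) (hk : 3 ≤ k)
    (a b : Fin k → ZMod p)
    (hminors : ∀ i j : Fin k, i ≠ j → a i * b j - a j * b i ≠ 0) :
    (∀ n : ℕ, ∫ ω, Pstat p n k a b ω ∂(circMeasure p n) = 0) ∧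
    ∃ c : ℝ, 0 < c ∧ ∃ n₀ : ℕ, ∀ n : ℕ, n₀ ≤ n →
      c * (p : ℝ) ^ (2 * n) ≤ ∫ ω, ‖Pstat p n k a b ω‖ ^ 2 ∂(circMeasure p n) := by
  have hodd : Odd p := hp.odd_of_ne_two (by omega)
  constructor
  · intro n
    exact expectation_zero hodd hk hminors
  · exact ⟨1 / 2, by norm_num, 3, fun n hn => second_moment hp hp2 hodd hk hminors hn⟩
end

section
/- Let p be a prime and let Ψ be a linear system given by a full-rank m×t matrix M_Ψ over 𝔽_p (m < t) with s(Ψ) = k−1. Then for every n ≥ 1 and every f : 𝔽_p^n → [−1/2, 1/2] with average E f = 0, one has T_Ψ(1/2 + f) + T_Ψ(1/2 − f) = 2^{1−t} + Σ_{S ⊆ {1,…,t}, |S| even, |S| ≥ k−1} 2^{1−t+|S|} T_{Ψ,S}(f), where T_{Ψ,S}(f) denotes the average over x ∈ sol(Ψ;𝔽_p^n) of Π_{i∈S} f(x_i). -/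
open Finset
open scoped Classical

/-- The set of solutions in `(𝔽_p^n)^t` to the homogeneous system given by the
`m × t` matrix `M` over `𝔽_p`, the matrix acting coordinatewise. -/
def sols (p m t n : ℕ) [NeZero p] (M : Matrix (Fin m) (Fin t) (ZMod p)) :
    Finset (Fin t → (Fin n → ZMod p)) :=
  Finset.univ.filter (fun x => ∀ i : Fin m, ∀ j : Fin n, (∑ l, M i l * x l j) = 0)

/-- The solution density `T_Ψ(f)`. -/
noncomputable def density (p m t n : ℕ) [NeZero p] (M : Matrix (Fin m) (Fin t) (ZMod p))
    (f : (Fin n → ZMod p) → ℝ) : ℝ :=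
  (∑ x ∈ sols p m t n M, ∏ i, f (x i)) / ((sols p m t n M).card : ℝ)

/-- `T_{Ψ,S}(f)`: the average over solutions of `∏_{i ∈ S} f(x_i)`. -/
noncomputable def densityOn (p m t n : ℕ) [NeZero p] (M : Matrix (Fin m) (Fin t) (ZMod p))
    (S : Finset (Fin t)) (f : (Fin n → ZMod p) → ℝ) : ℝ :=
  (∑ x ∈ sols p m t n M, ∏ i ∈ S, f (x i)) / ((sols p m t n M).card : ℝ)

/-- `s(Ψ) = s`: the minimum number of nonzero coordinates of a nonzero vector in the
row space of `M` equals `s`. -/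
def sEq (p m t : ℕ) (M : Matrix (Fin m) (Fin t) (ZMod p)) (s : ℕ) : Prop :=
  (∀ c : Fin m → ZMod p, Matrix.vecMul c M ≠ 0 →
    s ≤ (Finset.univ.filter (fun i => Matrix.vecMul c M i ≠ 0)).card) ∧
  (∃ c : Fin m → ZMod p, Matrix.vecMul c M ≠ 0 ∧
    (Finset.univ.filter (fun i => Matrix.vecMul c M i ≠ 0)).card = s)


set_option synthInstance.maxHeartbeats 1000000 in
set_option maxHeartbeats 1000000 in
lemma keyA {p m t : ℕ} [NeZero p] (hp : p.Prime) (M : Matrix (Fin m) (Fin t) (ZMod p))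
    (hrank : M.rank = m) (k : ℕ)
    (hs1 : ∀ c : Fin m → ZMod p, Matrix.vecMul c M ≠ 0 →
      k - 1 ≤ (Finset.univ.filter (fun i => Matrix.vecMul c M i ≠ 0)).card)
    (S : Finset (Fin t)) (hS : S.card < k - 1) (y : Fin t → ZMod p) :
    ∃ x : Fin t → ZMod p, M.mulVec x = 0 ∧ ∀ i ∈ S, x i = y i := by
  haveI := Fact.mk hp
  -- rows of M are linearly independent
  have rowsli : LinearIndependent (ZMod p) (fun i => M i) := by
    rw [linearIndependent_iff_card_eq_finrank_span, Fintype.card_fin, Set.finrank]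
    exact hrank.symm.trans (Matrix.rank_eq_finrank_span_row M)
  have hinj : Function.Injective M.vecMul := Matrix.vecMul_injective_iff.mpr rowsli
  -- augmented matrix
  set A : Matrix (Fin m ⊕ {i // i ∈ S}) (Fin t) (ZMod p) :=
    Matrix.of (Sum.elim (fun i => M i) (fun i : {i // i ∈ S} => Pi.single i.1 (1 : ZMod p))) with hA
  have hAli : LinearIndependent (ZMod p) (fun i => A i) := by
    rw [Fintype.linearIndependent_iff]
    intro g hg
    rw [Fintype.sum_sum_type] at hg
    set c : Fin m → ZMod p := fun i => g (Sum.inl i) with hc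
    set w : {i // i ∈ S} → ZMod p := fun i => g (Sum.inr i) with hw
    have hvm : ∀ j, Matrix.vecMul c M j = ∑ i, c i * M i j := by
      intro j; simp [Matrix.vecMul, dotProduct]
    have hrow : ∀ j, (∑ i, c i * M i j) + (∑ i : {i // i ∈ S}, w i * (Pi.single i.1 (1 : ZMod p) : Fin t → ZMod p) j) = 0 := by
      intro j
      have := congrFun hg j
      simpa [Finset.sum_apply, Pi.smul_apply, smul_eq_mul, hA] using this
    have hcM0 : Matrix.vecMul c M = 0 := by
      by_contra hne
      have hsub : (Finset.univ.filter (fun j => Matrix.vecMul c M j ≠ 0)) ⊆ S := by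
        intro j hj
        rw [Finset.mem_filter] at hj
        by_contra hjS
        apply hj.2
        have h2 : (∑ i : {i // i ∈ S}, w i * (Pi.single i.1 (1 : ZMod p) : Fin t → ZMod p) j) = 0 := by
          apply Finset.sum_eq_zero
          intro i _
          have : (i : Fin t) ≠ j := fun h => hjS (h ▸ i.2)
          rw [Pi.single_eq_of_ne (Ne.symm this), mul_zero]
        rw [hvm]
        have := hrow j
        rw [h2, add_zero] at this
        exact this
      have := hs1 c hne
      have hle := Finset.card_le_card hsub
      omega
    have hc0 : c = 0 := hinj (by simpa [Matrix.zero_vecMul] using hcM0)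
    rintro (i | i)
    · exact congrFun hc0 i
    · -- w i = 0
      have := hrow i.1
      have hz : ∑ l, c l * M l i.1 = 0 := by
        have := congrFun hcM0 i.1
        rw [← hvm]; exact this
      rw [hz, zero_add] at this
      have : ∑ i' : {i // i ∈ S}, w i' * (Pi.single (i' : Fin t) (1 : ZMod p) : Fin t → ZMod p) i.1 = 0 := this
      rw [Finset.sum_eq_single i] at this
      · simpa using this
      · intro b _ hb
        have hne : (i.1 : Fin t) ≠ (b : Fin t) := fun h => hb (Subtype.ext h.symm)
        rw [Pi.single_eq_of_ne hne, mul_zero]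
      · intro h; exact absurd (Finset.mem_univ i) h
  -- rank of A
  have hrankA : A.rank = m + S.card := by
    rw [hAli.rank_matrix]
    simp [Fintype.card_sum, Fintype.card_coe]
  have hdimV : Module.finrank (ZMod p) (Fin t → ZMod p) = t := by simp
  have h1 : m + Module.finrank (ZMod p) (LinearMap.ker M.mulVecLin) = t := by
    have h := LinearMap.finrank_range_add_finrank_ker M.mulVecLin
    rw [hdimV] at h
    have hr : Module.finrank (ZMod p) (LinearMap.range M.mulVecLin) = m := by
      exact hrank
    omega
  have h2 : (m + S.card) + Module.finrank (ZMod p) (LinearMap.ker A.mulVecLin) = t := by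
    have h := LinearMap.finrank_range_add_finrank_ker A.mulVecLin
    rw [hdimV] at h
    have hr : Module.finrank (ZMod p) (LinearMap.range A.mulVecLin) = m + S.card := by
      exact hrankA
    omega
  set π : (Fin t → ZMod p) →ₗ[ZMod p] ({i // i ∈ S} → ZMod p) :=
    LinearMap.funLeft (ZMod p) (ZMod p) (fun i : {i // i ∈ S} => (i : Fin t)) with hπ
  set K := LinearMap.ker M.mulVecLin with hK
  have hAmv : ∀ x : Fin t → ZMod p,
      A.mulVecLin x = 0 ↔ (M.mulVecLin x = 0 ∧ π x = 0) := by
    intro x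
    constructor
    · intro h
      constructor
      · ext i
        have := congrFun h (Sum.inl i)
        simpa [Matrix.mulVecLin_apply, Matrix.mulVec, hA] using this
      · ext i
        have := congrFun h (Sum.inr i)
        simpa [Matrix.mulVecLin_apply, Matrix.mulVec, hA, single_dotProduct, hπ,
          LinearMap.funLeft_apply] using this
    · rintro ⟨hx1, hx2⟩
      ext (i | i)
      · have := congrFun hx1 i
        simpa [Matrix.mulVecLin_apply, Matrix.mulVec, hA] using this
      · have := congrFun hx2 i
        simpa [Matrix.mulVecLin_apply, Matrix.mulVec, hA, single_dotProduct, hπ,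
          LinearMap.funLeft_apply] using this
  have hle : LinearMap.ker A.mulVecLin ≤ K := by
    intro x hx
    rw [LinearMap.mem_ker] at hx
    rw [hK, LinearMap.mem_ker]
    exact ((hAmv x).mp hx).1
  have hker : LinearMap.ker (π.comp K.subtype) = (LinearMap.ker A.mulVecLin).comap K.subtype := by
    ext ⟨x, hx⟩
    simp only [LinearMap.mem_ker, Submodule.mem_comap, LinearMap.comp_apply,
      Submodule.subtype_apply]
    rw [hK, LinearMap.mem_ker] at hx
    rw [hAmv x]
    exact ⟨fun h => ⟨hx, h⟩, fun h => h.2⟩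
  have hrn := LinearMap.finrank_range_add_finrank_ker (π.comp K.subtype)
  have hkerdim : Module.finrank (ZMod p) (LinearMap.ker (π.comp K.subtype))
      = Module.finrank (ZMod p) (LinearMap.ker A.mulVecLin) := by
    rw [hker]
    exact (Submodule.comapSubtypeEquivOfLe hle).finrank_eq
  have hrange : LinearMap.range (π.comp K.subtype) = K.map π := by
    rw [LinearMap.range_comp, Submodule.range_subtype]
  have hKrn := LinearMap.finrank_range_add_finrank_ker (K.subtype)
  have htop : K.map π = ⊤ := by
    apply Submodule.eq_top_of_finrank_eq
    have hfr : Module.finrank (ZMod p) ({i // i ∈ S} → ZMod p) = S.card := by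
      simp [Module.finrank_pi, Fintype.card_coe]
    rw [hfr, ← hrange]
    rw [hkerdim] at hrn
    -- hrn : finrank range + finrank kerA = finrank K
    have hKd : m + Module.finrank (ZMod p) K = t := h1
    omega
  have hy : (fun i : {i // i ∈ S} => y i.1) ∈ K.map π := by rw [htop]; trivial
  obtain ⟨x, hxK, hxy⟩ := hy
  refine ⟨x, ?_, ?_⟩
  · have hxK' : x ∈ LinearMap.ker M.mulVecLin := hxK
    rw [LinearMap.mem_ker, Matrix.mulVecLin_apply] at hxK'
    exact hxK'
  · intro i hi
    have := congrFun hxy ⟨i, hi⟩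
    simpa [hπ, LinearMap.funLeft_apply] using this


lemma sols_zero_mem (p m t n : ℕ) [NeZero p] (M : Matrix (Fin m) (Fin t) (ZMod p)) :
    (0 : Fin t → Fin n → ZMod p) ∈ sols p m t n M := by
  simp [sols]

lemma sols_add {p m t n : ℕ} [NeZero p] {M : Matrix (Fin m) (Fin t) (ZMod p)}
    {x y : Fin t → Fin n → ZMod p}
    (hx : x ∈ sols p m t n M) (hy : y ∈ sols p m t n M) : x + y ∈ sols p m t n M := by
  simp only [sols, Finset.mem_filter, Finset.mem_univ, true_and] at hx hy ⊢
  intro i j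
  simp [Pi.add_apply, mul_add, Finset.sum_add_distrib, hx i j, hy i j]

lemma sols_sub {p m t n : ℕ} [NeZero p] {M : Matrix (Fin m) (Fin t) (ZMod p)}
    {x y : Fin t → Fin n → ZMod p}
    (hx : x ∈ sols p m t n M) (hy : y ∈ sols p m t n M) : x - y ∈ sols p m t n M := by
  simp only [sols, Finset.mem_filter, Finset.mem_univ, true_and] at hx hy ⊢
  intro i j
  simp [Pi.sub_apply, mul_sub, Finset.sum_sub_distrib, hx i j, hy i j]

lemma vanish (p m t k n : ℕ) [NeZero p] (hp : p.Prime) (M : Matrix (Fin m) (Fin t) (ZMod p))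
    (hrank : M.rank = m)
    (hs1 : ∀ c : Fin m → ZMod p, Matrix.vecMul c M ≠ 0 →
      k - 1 ≤ (Finset.univ.filter (fun i => Matrix.vecMul c M i ≠ 0)).card)
    (S : Finset (Fin t)) (hSne : S.Nonempty) (hS : S.card < k - 1)
    (f : (Fin n → ZMod p) → ℝ) (hsum : ∑ z, f z = 0) :
    (∑ x ∈ sols p m t n M, ∏ i ∈ S, f (x i)) = 0 := by
  classical
  set r : (Fin t → Fin n → ZMod p) → ({i // i ∈ S} → Fin n → ZMod p) :=
    fun x i => x i.1 with hr
  have hsurj : ∀ y : {i // i ∈ S} → Fin n → ZMod p, ∃ x ∈ sols p m t n M, r x = y := by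
    intro y
    choose g hg1 hg2 using fun j : Fin n =>
      keyA hp M hrank k hs1 S hS (fun l => if h : l ∈ S then y ⟨l, h⟩ j else 0)
    refine ⟨fun l j => g j l, ?_, ?_⟩
    · simp only [sols, Finset.mem_filter, Finset.mem_univ, true_and]
      intro i j
      have := congrFun (hg1 j) i
      simpa [Matrix.mulVec, dotProduct] using this
    · funext i
      funext j
      have := hg2 j i.1 i.2
      simpa [hr, dif_pos i.2] using this
  have hradd : ∀ a b : Fin t → Fin n → ZMod p, r (a + b) = r a + r b := fun a b => rfl
  have hrsub : ∀ a b : Fin t → Fin n → ZMod p, r (a - b) = r a - r b := fun a b => rfl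
  have hfib : ∀ y : {i // i ∈ S} → Fin n → ZMod p,
      ((sols p m t n M).filter (fun x => r x = y)).card
        = ((sols p m t n M).filter (fun x => r x = 0)).card := by
    intro y
    obtain ⟨x0, hx0s, hx0⟩ := hsurj y
    symm
    apply Finset.card_bij' (fun x _ => x + x0) (fun x _ => x - x0)
    · intro a ha
      rw [Finset.mem_filter] at ha ⊢
      exact ⟨sols_add ha.1 hx0s, by rw [hradd, ha.2, hx0, zero_add]⟩
    · intro a ha
      rw [Finset.mem_filter] at ha ⊢
      exact ⟨sols_sub ha.1 hx0s, by rw [hrsub, ha.2, hx0, sub_self]⟩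
    · intro a _; simp
    · intro a _; simp
  have key : ∑ x ∈ sols p m t n M, ∏ i ∈ S, f (x i)
      = ∑ x ∈ sols p m t n M, (fun y : {i // i ∈ S} → Fin n → ZMod p => ∏ i, f (y i)) (r x) := by
    apply Finset.sum_congr rfl
    intro x _
    rw [← Finset.prod_coe_sort]
  rw [key, Finset.sum_comp (fun y : {i // i ∈ S} → Fin n → ZMod p => ∏ i, f (y i)) r]
  have himg : (sols p m t n M).image r = Finset.univ := by
    apply Finset.eq_univ_of_forall
    intro y
    rw [Finset.mem_image]
    obtain ⟨x, hx, hxy⟩ := hsurj y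
    exact ⟨x, hx, hxy⟩
  rw [himg]
  set c := ((sols p m t n M).filter (fun x => r x = 0)).card with hc
  have : ∀ y ∈ (Finset.univ : Finset ({i // i ∈ S} → Fin n → ZMod p)),
      ((sols p m t n M).filter (fun x => r x = y)).card • (∏ i, f (y i))
        = c • (∏ i, f (y i)) := by
    intro y _
    rw [hfib y]
  rw [Finset.sum_congr rfl this, ← Finset.smul_sum]
  have hzero : ∑ y : {i // i ∈ S} → Fin n → ZMod p, ∏ i, f (y i) = 0 := by
    rw [← Fintype.prod_sum (fun (_ : {i // i ∈ S}) (v : Fin n → ZMod p) => f v)]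
    obtain ⟨i0, hi0⟩ := hSne
    exact Finset.prod_eq_zero (Finset.mem_univ (⟨i0, hi0⟩ : {i // i ∈ S})) hsum
  rw [hzero, smul_zero]

/-- Multilinear expansion: for `Ψ` a full-rank `m × t` system with `s(Ψ) = k − 1`,
every `n ≥ 1` and every `f : 𝔽_p^n → [−1/2,1/2]` with `E f = 0`,
`T_Ψ(1/2 + f) + T_Ψ(1/2 − f)
  = 2^{1−t} + ∑_{S ⊆ [t], |S| even, |S| ≥ k−1} 2^{1−t+|S|} T_{Ψ,S}(f)`. -/
theorem stmt16 (p m t k n : ℕ) [NeZero p] (hp : p.Prime) (hmt : m < t) (hn : 1 ≤ n)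
    (M : Matrix (Fin m) (Fin t) (ZMod p)) (hrank : M.rank = m)
    (hs : sEq p m t M (k - 1))
    (f : (Fin n → ZMod p) → ℝ) (hf : ∀ x, f x ∈ Set.Icc (-(1:ℝ)/2) (1/2))
    (hmean : (∑ z, f z) / ((p : ℝ) ^ n) = 0) :
    density p m t n M (fun x => 1/2 + f x) + density p m t n M (fun x => 1/2 - f x)
      = (2 : ℝ) ^ ((1 : ℤ) - t) +
        ∑ S ∈ (Finset.univ : Finset (Finset (Fin t))).filter
            (fun S => Even S.card ∧ k - 1 ≤ S.card),
          (2 : ℝ) ^ ((1 : ℤ) - t + S.card) * densityOn p m t n M S f := by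
  classical
  obtain ⟨hs1, c0, hc0, hcard0⟩ := hs
  have hk1 : 1 ≤ k - 1 := by
    rcases Nat.eq_zero_or_pos (k - 1) with h | h
    · exfalso
      rw [h, Finset.card_eq_zero] at hcard0
      apply hc0
      funext j
      simp only [Pi.zero_apply]
      by_contra hj
      have hjmem : j ∈ Finset.univ.filter (fun i => Matrix.vecMul c0 M i ≠ 0) := by
        simp [hj]
      rw [hcard0] at hjmem
      exact absurd hjmem (Finset.notMem_empty j)
    · exact h
  have hN0 : 0 < (sols p m t n M).card := Finset.card_pos.mpr ⟨0, sols_zero_mem p m t n M⟩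
  have hN : ((sols p m t n M).card : ℝ) ≠ 0 := Nat.cast_ne_zero.mpr hN0.ne'
  have hsum : ∑ z, f z = 0 := by
    rcases div_eq_zero_iff.mp hmean with h | h
    · exact h
    · exact absurd h (pow_ne_zero n (Nat.cast_ne_zero.mpr (NeZero.ne p)))
  have hvan : ∀ T : Finset (Fin t), T.Nonempty → T.card < k - 1 →
      densityOn p m t n M T f = 0 := by
    intro T hTne hT
    rw [densityOn, vanish p m t k n hp M hrank hs1 T hTne hT f hsum, zero_div]
  have hdenE : densityOn p m t n M ∅ f = 1 := by
    rw [densityOn]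
    simp only [Finset.prod_empty, Finset.sum_const, nsmul_eq_mul, mul_one]
    exact div_self hN
  have hcoef : ∀ c : ℕ, c ≤ t → (2:ℝ) * (1/2)^(t - c) = (2:ℝ)^((1:ℤ) - t + c) := by
    intro c hc
    rw [div_pow, one_pow, mul_one_div]
    rw [show (1:ℤ) - t + c = 1 - ((t - c : ℕ) : ℤ) by push_cast [Nat.cast_sub hc]; ring,
      zpow_sub₀ two_ne_zero, zpow_one, zpow_natCast]
  have expand : ∀ (ε : ℝ) (x : Fin t → Fin n → ZMod p),
      (∏ i, ((1:ℝ)/2 + ε * f (x i)))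
        = ∑ T : Finset (Fin t), ε ^ T.card * ((1/2:ℝ) ^ (t - T.card) * ∏ i ∈ T, f (x i)) := by
    intro ε x
    calc ∏ i, ((1:ℝ)/2 + ε * f (x i)) = ∏ i, (ε * f (x i) + 1/2) := by
          exact Finset.prod_congr rfl (fun i _ => add_comm _ _)
      _ = ∑ T ∈ Finset.univ.powerset, (∏ i ∈ T, (ε * f (x i))) * ∏ _i ∈ Finset.univ \ T, (1/2:ℝ) :=
          Finset.prod_add _ _ _
      _ = ∑ T : Finset (Fin t), ε ^ T.card * ((1/2:ℝ) ^ (t - T.card) * ∏ i ∈ T, f (x i)) := by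
          rw [Finset.powerset_univ]
          apply Finset.sum_congr rfl
          intro T _
          rw [Finset.prod_const, Finset.card_sdiff_of_subset (Finset.subset_univ T), Finset.card_univ,
            Fintype.card_fin, Finset.prod_mul_distrib, Finset.prod_const]
          ring
  have hnum : ∀ ε : ℝ, (∑ x ∈ sols p m t n M, ∏ i, ((1:ℝ)/2 + ε * f (x i)))
      = ∑ T : Finset (Fin t), ε ^ T.card * ((1/2:ℝ) ^ (t - T.card)
          * ∑ x ∈ sols p m t n M, ∏ i ∈ T, f (x i)) := by
    intro ε
    rw [Finset.sum_congr rfl (fun x _ => expand ε x), Finset.sum_comm]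
    apply Finset.sum_congr rfl
    intro T _
    rw [← Finset.mul_sum, ← Finset.mul_sum]
  have hden : density p m t n M (fun x => 1/2 + f x) + density p m t n M (fun x => 1/2 - f x)
      = ∑ T : Finset (Fin t), ((1:ℝ) + (-1)^T.card) * ((1/2:ℝ)^(t - T.card)
          * densityOn p m t n M T f) := by
    have h1 := hnum 1
    have h2 := hnum (-1)
    simp only [one_mul, one_pow] at h1
    simp only [neg_one_mul, ← sub_eq_add_neg] at h2
    rw [density, density]
    rw [h1, h2, ← add_div, ← Finset.sum_add_distrib, Finset.sum_div]
    apply Finset.sum_congr rfl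
    intro T _
    rw [densityOn]
    field_simp
  rw [hden]
  rw [show (∑ T : Finset (Fin t), ((1:ℝ) + (-1)^T.card) * ((1/2:ℝ)^(t - T.card)
        * densityOn p m t n M T f))
      = ∑ T ∈ Finset.univ.filter (fun T : Finset (Fin t) => Even T.card ∧ k - 1 ≤ T.card),
          ((1:ℝ) + (-1)^T.card) * ((1/2:ℝ)^(t - T.card) * densityOn p m t n M T f)
        + ∑ T ∈ Finset.univ.filter (fun T : Finset (Fin t) => ¬(Even T.card ∧ k - 1 ≤ T.card)),
          ((1:ℝ) + (-1)^T.card) * ((1/2:ℝ)^(t - T.card) * densityOn p m t n M T f)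
    from (Finset.sum_filter_add_sum_filter_not Finset.univ _ _).symm]
  have hsmall : ∑ T ∈ Finset.univ.filter (fun T : Finset (Fin t) => ¬(Even T.card ∧ k - 1 ≤ T.card)),
      ((1:ℝ) + (-1)^T.card) * ((1/2:ℝ)^(t - T.card) * densityOn p m t n M T f)
      = (2:ℝ)^((1:ℤ) - t) := by
    rw [Finset.sum_eq_single_of_mem (∅ : Finset (Fin t))]
    · rw [hdenE, Finset.card_empty]
      rw [show ((1:ℝ) + (-1)^(0:ℕ)) = 2 by norm_num]
      rw [mul_one]
      rw [Nat.sub_zero]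
      have h0 := hcoef 0 (Nat.zero_le t)
      rw [Nat.sub_zero] at h0
      rw [h0]
      norm_num
    · simp only [Finset.mem_filter, Finset.mem_univ, true_and, Finset.card_empty]
      intro h
      omega
    · intro T hT hTne
      rw [Finset.mem_filter] at hT
      rcases Nat.even_or_odd T.card with he | ho
      · have hTlt : T.card < k - 1 := by
          rcases Nat.lt_or_ge T.card (k-1) with h | h
          · exact h
          · exact absurd ⟨he, h⟩ hT.2
        rw [hvan T (Finset.nonempty_iff_ne_empty.mpr hTne) hTlt]
        ring
      · rw [ho.neg_one_pow]
        ring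
  rw [hsmall]
  rw [add_comm]
  congr 1
  apply Finset.sum_congr rfl
  intro T hT
  rw [Finset.mem_filter] at hT
  rw [hT.2.1.neg_one_pow]
  rw [show ((1:ℝ) + 1) = 2 by norm_num]
  rw [← hcoef T.card ((Finset.card_le_univ T).trans_eq (by simp)), mul_assoc]
end

section
/- Let p > 2 be prime, k ≥ 3, and let a = (a_1,…,a_k), b = (b_1,…,b_k) ∈ 𝔽_p^k satisfy a_i b_j − a_j b_i ≠ 0 for all i ≠ j. Then there is a constant C (depending on p and k only) such that for every n ≥ 1, the number of tuples (h, (r_1,s_1), (r_2,s_2), (r_3,s_3), (r_4,s_4)) — where h ∈ 𝔽_p^n, each (r_j,s_j) ∈ (𝔽_p^n)² is a linearly independent pair, for each j one has h ∈ M(r_j,s_j) and h ⪰ |h'| for every h' ∈ M(r_j,s_j), and the 4k-element multiset ⋃_{j=1}^4 |M(r_j,s_j)| can be partitioned into pairs of equal elements — is at most C·p^{3n}. -/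
open Finset
open scoped Classical

/-- The lexicographic order `g ⪯ h` on `𝔽_p^n`. -/
def lexLe (p n : ℕ) (g h : Fin n → ZMod p) : Prop :=
  g = h ∨ ∃ i : Fin n, (g i).valMinAbs < (h i).valMinAbs ∧ ∀ j : Fin n, j < i → g j = h j

/-- `|h| := h` if `h ⪰ 0`, and `−h` otherwise. -/
noncomputable def absLex (p n : ℕ) (h : Fin n → ZMod p) : Fin n → ZMod p :=
  if h = 0 ∨ posLex p n h then h else -h

/-- The multiset `M(r,s) = {a_i r + b_i s : 1 ≤ i ≤ k}`. -/
def Mset (p n k : ℕ) (a b : Fin k → ZMod p) (r s : Fin n → ZMod p) :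
    Multiset (Fin n → ZMod p) :=
  (Finset.univ : Finset (Fin k)).val.map (fun i => a i • r + b i • s)

/-!
Each pair `(r_j, s_j)` is determined by two values `a_i r_j + b_i s_j` at distinct indices, since
the minors are nonzero. One of these values is `h`. Within one `M(r_j, s_j)` the absolute values
are distinct, because linear independence and the nonzero minors make the `k` values pairwise
non-proportional; so the pairing of `⋃_j |M(r_j, s_j)|` matches a second value of every pair with
`±` a value of another pair. Ordering the four pairs so that the third and fourth are linked to
earlier ones, a tuple is recovered from `h`, one further value of each of the first two pairs, and
boundedly many discrete choices, which gives at most `C · p^{3n}` tuples.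
-/

def pencil {K M ι : Type*} [SMul K M] [Add M] (a b : ι → K) (x : M × M) (i : ι) : M :=
  a i • x.1 + b i • x.2

section Pencil

variable {K M ι : Type*} [Field K] [AddCommGroup M] [Module K M] {a b : ι → K}

theorem eq_of_pencil_eq_pencil {i j : ι} (hdet : a i * b j - a j * b i ≠ 0) {x y : M × M}
    (hi : pencil a b x i = pencil a b y i) (hj : pencil a b x j = pencil a b y j) : x = y := by
  unfold pencil at hi hj
  have h₁ : (a i * b j - a j * b i) • (x.1 - y.1) = 0 := by
    calc (a i * b j - a j * b i) • (x.1 - y.1)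
        = b j • (a i • x.1 + b i • x.2) - b i • (a j • x.1 + b j • x.2)
          - (b j • (a i • y.1 + b i • y.2) - b i • (a j • y.1 + b j • y.2)) := by module
      _ = 0 := by rw [hi, hj, sub_self]
  have h₂ : (a i * b j - a j * b i) • (x.2 - y.2) = 0 := by
    calc (a i * b j - a j * b i) • (x.2 - y.2)
        = a i • (a j • x.1 + b j • x.2) - a j • (a i • x.1 + b i • x.2)
          - (a i • (a j • y.1 + b j • y.2) - a j • (a i • y.1 + b i • y.2)) := by module
      _ = 0 := by rw [hi, hj, sub_self]
  exact Prod.ext (sub_eq_zero.mp ((smul_eq_zero.mp h₁).resolve_left hdet))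
    (sub_eq_zero.mp ((smul_eq_zero.mp h₂).resolve_left hdet))

theorem eq_of_pencil_eq_smul_pencil (hab : ∀ i j, i ≠ j → a i * b j - a j * b i ≠ 0)
    {x : M × M} (hx : LinearIndependent K ![x.1, x.2]) {i j : ι} {c : K}
    (h : pencil a b x i = c • pencil a b x j) : i = j := by
  by_contra hij
  have hzero : (a i - c * a j) • x.1 + (b i - c * b j) • x.2 = 0 := by
    unfold pencil at h
    rw [← sub_eq_zero] at h
    rw [← h]
    module
  obtain ⟨ha, hb⟩ := LinearIndependent.pair_iff.mp hx _ _ hzero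
  apply hab i j hij
  rw [sub_eq_zero.mp ha, sub_eq_zero.mp hb]
  ring

end Pencil

theorem Multiset.exists_ne_mem_of_sum_eq_add_self {ι β : Type*} [Fintype ι] (X : ι → Multiset β)
    {V : Multiset β} (hV : ∑ j, X j = V + V) {j : ι} (hj : (X j).Nodup) {x : β}
    (hx : x ∈ X j) : ∃ j' ≠ j, x ∈ X j' := by
  by_contra! hout
  have hcount : (∑ j, X j).count x = 1 := by
    rw [Multiset.count_sum', Finset.sum_eq_single j (fun j' _ hj' => Multiset.count_eq_zero.mpr
      (hout j' hj')) (by simp), Multiset.count_eq_one_of_mem hj hx]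
  rw [hV, Multiset.count_add] at hcount
  omega

theorem exists_units_smul_of_absLex_eq {p n : ℕ} {u v : Fin n → ZMod p}
    (h : absLex p n u = absLex p n v) : ∃ ε : ℤˣ, u = ε • v := by
  have self_or_neg (w : Fin n → ZMod p) : absLex p n w = w ∨ absLex p n w = -w := by
    unfold absLex
    split_ifs <;> simp
  rcases self_or_neg u with hu | hu <;> rcases self_or_neg v with hv | hv <;> rw [hu, hv] at h
  · exact ⟨1, by simpa using h⟩
  · exact ⟨-1, by simpa using h⟩
  · exact ⟨-1, by simpa using neg_eq_iff_eq_neg.mp h⟩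
  · exact ⟨1, by simpa using h⟩

theorem mem_Mset {p n k : ℕ} {a b : Fin k → ZMod p} {x : (Fin n → ZMod p) × (Fin n → ZMod p)}
    {h : Fin n → ZMod p} : h ∈ Mset p n k a b x.1 x.2 ↔ ∃ i, pencil a b x i = h := by
  simp only [Mset, Multiset.mem_map, Finset.mem_val, Finset.mem_univ, true_and]
  rfl

theorem exists_link_of_sum_absLex_eq_add_self {p n k : ℕ} [Fact p.Prime] {a b : Fin k → ZMod p}
    (hab : ∀ i j, i ≠ j → a i * b j - a j * b i ≠ 0)
    {v : Fin 4 → (Fin n → ZMod p) × (Fin n → ZMod p)}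
    (hv : ∀ j, LinearIndependent (ZMod p) ![(v j).1, (v j).2]) {V : Multiset (Fin n → ZMod p)}
    (hV : ∑ j, (Mset p n k a b (v j).1 (v j).2).map (absLex p n) = V + V) (j : Fin 4) (i : Fin k) :
    ∃ j' ≠ j, ∃ (i' : Fin k) (ε : ℤˣ), pencil a b (v j) i = ε • pencil a b (v j') i' := by
  have hmap (j : Fin 4) : (Mset p n k a b (v j).1 (v j).2).map (absLex p n) =
      univ.val.map (absLex p n ∘ pencil a b (v j)) := by
    simp only [Mset, Multiset.map_map]
    rfl
  have hinj (j : Fin 4) : Function.Injective (absLex p n ∘ pencil a b (v j)) := by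
    intro i i' he
    obtain ⟨ε, hε⟩ := exists_units_smul_of_absLex_eq he
    rw [Units.smul_def, ← Int.cast_smul_eq_zsmul (ZMod p)] at hε
    exact eq_of_pencil_eq_smul_pencil hab (hv j) hε
  obtain ⟨j', hj', hmem⟩ := Multiset.exists_ne_mem_of_sum_eq_add_self _ hV
    (by rw [hmap]; exact univ.nodup.map (hinj j))
    (Multiset.mem_map_of_mem _ (mem_Mset.mpr ⟨i, rfl⟩))
  rw [hmap, Multiset.mem_map] at hmem
  obtain ⟨i', -, hi'⟩ := hmem
  obtain ⟨ε, hε⟩ := exists_units_smul_of_absLex_eq hi'.symm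
  exact ⟨j', hj', i', ε, hε⟩

theorem exists_equiv_symm_lt (τ : Fin 4 → Fin 4) (hτ : ∀ j, τ j ≠ j) :
    ∃ σ : Fin 4 ≃ Fin 4, ∀ m, 2 ≤ m → σ.symm (τ (σ m)) < m := by
  have hswap : ∀ t : Fin 4, t ≠ 1 → ((Equiv.swap 1 2).trans (Equiv.swap 0 t)) 2 = 1 ∧
      ((Equiv.swap 1 2).trans (Equiv.swap 0 t)).symm t = 0 := by
    decide
  refine ⟨(Equiv.swap 1 2).trans (Equiv.swap 0 (τ 1)), fun m hm => ?_⟩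
  set σ := (Equiv.swap 1 2).trans (Equiv.swap 0 (τ 1))
  obtain rfl | rfl : m = 2 ∨ m = 3 := by omega
  · obtain ⟨h2, h0⟩ := hswap (τ 1) (hτ 1)
    rw [h2, h0]
    decide
  · have : σ.symm (τ (σ 3)) ≠ 3 := fun h => hτ (σ 3) (σ.symm_apply_eq.mp h)
    omega

structure Pattern (ι : Type*) where
  order : Fin 4 ≃ Fin 4
  hSlot : Fin 4 → ι
  freeSlot : Fin 4 → ι
  partner : Fin 4 → Fin 4
  partnerSlot : Fin 4 → ι
  sign : Fin 4 → ℤˣ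

namespace Pattern

variable {K M ι : Type*} [Field K] [AddCommGroup M] [Module K M]

def equivProd : Pattern ι ≃
    (Fin 4 ≃ Fin 4) × (Fin 4 → ι) × (Fin 4 → ι) × (Fin 4 → Fin 4) × (Fin 4 → ι) × (Fin 4 → ℤˣ) where
  toFun d := (d.order, d.hSlot, d.freeSlot, d.partner, d.partnerSlot, d.sign)
  invFun x := ⟨x.1, x.2.1, x.2.2.1, x.2.2.2.1, x.2.2.2.2.1, x.2.2.2.2.2⟩
  left_inv _ := rfl
  right_inv _ := rfl

noncomputable instance [Fintype ι] : Fintype (Pattern ι) := Fintype.ofEquiv _ equivProd.symm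

structure IsPattern (a b : ι → K) (d : Pattern ι) (z : M × (Fin 4 → M × M)) : Prop where
  order_partner_lt : ∀ m, 2 ≤ m → d.order.symm (d.partner (d.order m)) < m
  pencil_hSlot : ∀ j, pencil a b (z.2 j) (d.hSlot j) = z.1
  hSlot_ne_freeSlot : ∀ j, d.hSlot j ≠ d.freeSlot j
  pencil_freeSlot : ∀ j,
    pencil a b (z.2 j) (d.freeSlot j) = d.sign j • pencil a b (z.2 (d.partner j)) (d.partnerSlot j)

def encode (a b : ι → K) (d : Pattern ι) (z : M × (Fin 4 → M × M)) : M × M × M :=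
  (z.1, pencil a b (z.2 (d.order 0)) (d.freeSlot (d.order 0)),
    pencil a b (z.2 (d.order 1)) (d.freeSlot (d.order 1)))

theorem exists_isPattern [Nontrivial ι] {a b : ι → K} {z : M × (Fin 4 → M × M)}
    (hmem : ∀ j, ∃ i, pencil a b (z.2 j) i = z.1)
    (hlink : ∀ j i, ∃ j' ≠ j, ∃ (i' : ι) (ε : ℤˣ),
      pencil a b (z.2 j) i = ε • pencil a b (z.2 j') i') :
    ∃ d : Pattern ι, IsPattern a b d z := by
  choose hSlot hhSlot using hmem
  choose freeSlot hfreeSlot using fun j => exists_ne (hSlot j)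
  choose partner hpartner partnerSlot sign hsign using fun j => hlink j (freeSlot j)
  obtain ⟨σ, hσ⟩ := exists_equiv_symm_lt partner hpartner
  exact ⟨⟨σ, hSlot, freeSlot, partner, partnerSlot, sign⟩, hσ, hhSlot,
    fun j => (hfreeSlot j).symm, hsign⟩

theorem IsPattern.eq_of_encode_eq {a b : ι → K} (hab : ∀ i j, i ≠ j → a i * b j - a j * b i ≠ 0)
    {d : Pattern ι} {z z' : M × (Fin 4 → M × M)} (hz : IsPattern a b d z)
    (hz' : IsPattern a b d z') (he : encode a b d z = encode a b d z') : z = z' := by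
  obtain ⟨hh, h0, h1⟩ : z.1 = z'.1 ∧ _ ∧ _ := by simpa [encode] using he
  have hpos (m : Fin 4) : z.2 (d.order m) = z'.2 (d.order m) := by
    induction m using WellFoundedLT.induction with
    | _ m ih =>
      have hfree : pencil a b (z.2 (d.order m)) (d.freeSlot (d.order m)) =
          pencil a b (z'.2 (d.order m)) (d.freeSlot (d.order m)) := by
        obtain rfl | rfl | hm : m = 0 ∨ m = 1 ∨ 2 ≤ m := by omega
        · exact h0
        · exact h1
        · rw [hz.pencil_freeSlot, hz'.pencil_freeSlot]
          simpa using congrArg (pencil a b · _) (ih _ (hz.order_partner_lt m hm))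
      exact eq_of_pencil_eq_pencil (hab _ _ (hz.hSlot_ne_freeSlot _))
        (by rw [hz.pencil_hSlot, hz'.pencil_hSlot, hh]) hfree
  exact Prod.ext hh (funext fun j => by simpa using hpos (d.order.symm j))

end Pattern

theorem Finset.card_le_card_mul_card_of_injOn_fiber {α D T : Type*} [Fintype D] [Fintype T]
    (S : Finset α) (R : D → α → Prop) (f : D → α → T) (hR : ∀ z ∈ S, ∃ d, R d z)
    (hf : ∀ d, Set.InjOn (f d) {z | R d z}) : #S ≤ Fintype.card D * Fintype.card T := by
  calc #S ≤ #(univ.biUnion fun d => S.filter (R d)) := card_le_card fun z hz => by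
          obtain ⟨d, hd⟩ := hR z hz
          exact mem_biUnion.mpr ⟨d, mem_univ _, mem_filter.mpr ⟨hz, hd⟩⟩
    _ ≤ ∑ d, #(S.filter (R d)) := card_biUnion_le
    _ ≤ ∑ _d : D, #(univ : Finset T) := sum_le_sum fun d _ =>
          card_le_card_of_injOn (f d) (fun _ _ => mem_coe.mpr (mem_univ _))
            ((hf d).mono fun _ hz => (mem_filter.mp hz).2)
    _ = Fintype.card D * Fintype.card T := by simp

open Pattern in
theorem stmt18_general (p k : ℕ) [NeZero p] (hp : p.Prime) (hk : 3 ≤ k)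
    (a b : Fin k → ZMod p)
    (hminors : ∀ i j : Fin k, i ≠ j → a i * b j - a j * b i ≠ 0) :
    ∃ C : ℝ, ∀ n : ℕ, 1 ≤ n →
      ((Finset.univ.filter
          (fun z : (Fin n → ZMod p) × (Fin 4 → (Fin n → ZMod p) × (Fin n → ZMod p)) =>
            (∀ j : Fin 4, LinearIndependent (ZMod p) ![(z.2 j).1, (z.2 j).2]) ∧
            (∀ j : Fin 4, z.1 ∈ Mset p n k a b (z.2 j).1 (z.2 j).2 ∧
              ∀ h' ∈ Mset p n k a b (z.2 j).1 (z.2 j).2, lexLe p n (absLex p n h') z.1) ∧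
            (∃ V : Multiset (Fin n → ZMod p),
              (∑ j : Fin 4, (Mset p n k a b (z.2 j).1 (z.2 j).2).map (absLex p n))
                = V + V))).card : ℝ)
        ≤ C * (p : ℝ) ^ (3 * n) := by
  have : Fact p.Prime := ⟨hp⟩
  have : Nontrivial (Fin k) := Fin.nontrivial_iff_two_le.mpr (by omega)
  refine ⟨Fintype.card (Pattern (Fin k)), fun n _ => ?_⟩
  have hT : Fintype.card ((Fin n → ZMod p) × (Fin n → ZMod p) × (Fin n → ZMod p)) =
      p ^ (3 * n) := by
    simp only [Fintype.card_prod, Fintype.card_fun, ZMod.card, Fintype.card_fin]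
    ring
  refine le_of_le_of_eq (Nat.cast_le.mpr (card_le_card_mul_card_of_injOn_fiber _
    (IsPattern a b) (encode a b) (fun z hz => ?_)
    fun _ _ hz _ hz' he => hz.eq_of_encode_eq hminors hz' he)) ?_
  · obtain ⟨hli, hmem, V, hV⟩ := (mem_filter.mp hz).2
    exact exists_isPattern (fun j => mem_Mset.mp (hmem j).1)
      (exists_link_of_sum_absLex_eq_add_self hminors hli hV)
  · rw [hT]
    push_cast
    rfl

/-- Let `p > 2` be prime, `k ≥ 3`, and `a, b ∈ 𝔽_p^k` with all `2 × 2` minors nonzero.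
There is a constant `C` (depending only on `p, k`) such that for all `n ≥ 1`, the
number of tuples `(h, (r_1,s_1), …, (r_4,s_4))` — each `(r_j,s_j)` linearly
independent, `h ∈ M(r_j,s_j)` with `h ⪰ |h'|` for all `h' ∈ M(r_j,s_j)` for every `j`,
and the `4k`-element multiset `⋃_j |M(r_j,s_j)|` partitionable into pairs of equal
elements — is at most `C · p^{3n}`. -/
theorem stmt18 (p k : ℕ) [NeZero p] (hp : p.Prime) (hp2 : 2 < p) (hk : 3 ≤ k)
    (a b : Fin k → ZMod p)
    (hminors : ∀ i j : Fin k, i ≠ j → a i * b j - a j * b i ≠ 0) :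
    ∃ C : ℝ, ∀ n : ℕ, 1 ≤ n →
      ((Finset.univ.filter
          (fun z : (Fin n → ZMod p) × (Fin 4 → (Fin n → ZMod p) × (Fin n → ZMod p)) =>
            (∀ j : Fin 4, LinearIndependent (ZMod p) ![(z.2 j).1, (z.2 j).2]) ∧
            (∀ j : Fin 4, z.1 ∈ Mset p n k a b (z.2 j).1 (z.2 j).2 ∧
              ∀ h' ∈ Mset p n k a b (z.2 j).1 (z.2 j).2, lexLe p n (absLex p n h') z.1) ∧
            (∃ V : Multiset (Fin n → ZMod p),
              (∑ j : Fin 4, (Mset p n k a b (z.2 j).1 (z.2 j).2).map (absLex p n))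
                = V + V))).card : ℝ)
        ≤ C * (p : ℝ) ^ (3 * n) :=
  stmt18_general p k hp hk a b hminors
end

section
/- Let p > 2 be prime, k ≥ 3, and let a = (a_1,…,a_k), b = (b_1,…,b_k) ∈ 𝔽_p^k satisfy a_i b_j − a_j b_i ≠ 0 for all i ≠ j. Then there is a constant C (depending on p and k only) such that for every n ≥ 1, the number of tuples (h_1, h_2, (r_1,s_1), (r_1',s_1'), (r_2,s_2), (r_2',s_2')) — where h_1, h_2 ∈ 𝔽_p^n with 0 ≺ h_1, 0 ≺ h_2 and h_1 ≠ h_2; each of the four pairs is a linearly independent pair in (𝔽_p^n)²; h_1 ∈ M(r_1,s_1) with h_1 ⪰ |h'| for all h' ∈ M(r_1,s_1), and likewise h_1 is the ⪯-maximum of |M(r_1',s_1')| with h_1 ∈ M(r_1',s_1'), and h_2 plays the same role for M(r_2,s_2) and M(r_2',s_2'); the multiset |M(r_1,s_1)| ∪ |M(r_1',s_1')| shares at least one common element with |M(r_2,s_2)| ∪ |M(r_2',s_2')|; and the 4k-element multiset |M(r_1,s_1)| ∪ |M(r_1',s_1')| ∪ |M(r_2,s_2)| ∪ |M(r_2',s_2')|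 can be partitioned into pairs of equal elements — is at most C·p^{3n}. -/
/-!
A linearly independent pair `(r, s)` has `k` distinct values `|a_i r + b_i s|`, and since all
minors `a_i b_j - a_j b_i` are nonzero it is recovered (Cramer's rule) from two of its values
`a_i r + b_i s`, or from one of them together with a free vector of `𝔽_p^n`. Pairing up the `4k`
values forces `|M(r₁,s₁)| ∆ |M(r₁',s₁')| = |M(r₂,s₂)| ∆ |M(r₂',s₂')|`, and for sets of size
`k ≥ 3` this leaves two cases. Either both pairs of `h₂` share two values with
`|M(r₁,s₁)| ∪ |M(r₁',s₁')|`: then `(r₁',s₁')` comes from `(r₁,s₁)`, the common value `h₁` and a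
free vector, and the pairs of `h₂` from two known values each. Or the two pairs of `h₁` share two
values, and so do the two pairs of `h₂`: then `(r₁',s₁')` comes from `(r₁,s₁)`, the pair of `h₂`
containing the common element from one known value and a free vector, and the other pair of `h₂`
from two values of that one. Either way a tuple is determined by `(r₁, s₁)`, one free vector and
data from a finite set independent of `n`.
-/

open Finset
open scoped Classical

open scoped symmDiff

def msetElem {K M ι : Type*} [SMul K M] [Add M] (a b : ι → K) (P : M × M) (i : ι) : M :=
  a i • P.1 + b i • P.2

lemma ne_zero_or_ne_zero_of_minor_ne_zero {K ι : Type*} [CommRing K] {a b : ι → K} {i j : ι}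
    (h : a i * b j - a j * b i ≠ 0) : a i ≠ 0 ∨ b i ≠ 0 := by
  by_contra hab
  push Not at hab
  exact h (by rw [hab.1, hab.2]; ring)

section Solve

variable {K M ι : Type*} [Field K] [AddCommGroup M] [Module K M] {a b : ι → K}

lemma eq_of_msetElem_eq_or_eq_neg (hminors : ∀ i j, i ≠ j → a i * b j - a j * b i ≠ 0)
    {P : M × M} (hP : LinearIndependent K ![P.1, P.2]) {i j : ι}
    (h : msetElem a b P i = msetElem a b P j ∨ msetElem a b P i = -msetElem a b P j) : i = j := by
  by_contra hij
  apply hminors i j hij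
  rcases h with h | h
  · obtain ⟨ha, hb⟩ := LinearIndependent.pair_iff.mp hP (a i - a j) (b i - b j)
      (by unfold msetElem at h; linear_combination (norm := module) h)
    rw [sub_eq_zero.mp ha, sub_eq_zero.mp hb]; ring
  · obtain ⟨ha, hb⟩ := LinearIndependent.pair_iff.mp hP (a i + a j) (b i + b j)
      (by unfold msetElem at h; linear_combination (norm := module) h)
    rw [eq_neg_of_add_eq_zero_left ha, eq_neg_of_add_eq_zero_left hb]; ring

variable (a b)

/-- Cramer's rule for `a i • r + b i • s = u`, `a j • r + b j • s = v`. -/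
def solveTwo (i j : ι) (u v : M) : M × M :=
  ((a i * b j - a j * b i)⁻¹ • (b j • u - b i • v),
   (a i * b j - a j * b i)⁻¹ • (a i • v - a j • u))

/-- Solves `a i • r + b i • s = u`, taking the free unknown to be `w`. -/
noncomputable def solveOne (i : ι) (u w : M) : M × M :=
  if b i = 0 then ((a i)⁻¹ • u, w) else (w, (b i)⁻¹ • (u - a i • w))

variable {a b}

lemma solveTwo_eq {P : M × M} {i j : ι} (h : a i * b j - a j * b i ≠ 0)
    {u v : M} (hu : msetElem a b P i = u) (hv : msetElem a b P j = v) :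
    solveTwo a b i j u v = P := by
  subst hu hv
  unfold solveTwo msetElem
  ext
  · rw [show b j • (a i • P.1 + b i • P.2) - b i • (a j • P.1 + b j • P.2)
        = (a i * b j - a j * b i) • P.1 by module, smul_smul, inv_mul_cancel₀ h, one_smul]
  · rw [show a i • (a j • P.1 + b j • P.2) - a j • (a i • P.1 + b i • P.2)
        = (a i * b j - a j * b i) • P.2 by module, smul_smul, inv_mul_cancel₀ h, one_smul]

lemma exists_solveOne_eq {P : M × M} {i : ι} (h : a i ≠ 0 ∨ b i ≠ 0) {u : M}
    (hu : msetElem a b P i = u) : ∃ w, solveOne a b i u w = P := by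
  subst hu
  unfold solveOne msetElem
  by_cases hb : b i = 0
  · refine ⟨P.2, ?_⟩
    rw [if_pos hb, hb, zero_smul, add_zero, smul_smul,
      inv_mul_cancel₀ (h.resolve_right (not_not.mpr hb)), one_smul]
  · refine ⟨P.1, ?_⟩
    rw [if_neg hb, add_sub_cancel_left, smul_smul, inv_mul_cancel₀ hb, one_smul]

end Solve

/-- `(true, s, j)` and `(false, s, j)` stand for `±(a j • r + b j • s)` where `(r, s) = env s`. -/
abbrev Ref (ι : Type*) := Bool × Fin 3 × ι

def evalRef {K M ι : Type*} [SMul K M] [Add M] [Neg M] (a b : ι → K) (env : Fin 3 → M × M) :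
    Ref ι → M
  | (true, s, j) => msetElem a b (env s) j
  | (false, s, j) => -msetElem a b (env s) j

section Decode

variable {K M ι : Type*} [Field K] [AddCommGroup M] [Module K M] (a b : ι → K)

/-- `inl`: one equation, completed by the free vector; `inr`: two equations. -/
abbrev Recipe (ι : Type*) := (ι × Ref ι) ⊕ ((ι × Ref ι) × (ι × Ref ι))

noncomputable def solveRecipe (env : Fin 3 → M × M) (w : M) : Recipe ι → M × M
  | .inl (i, r) => solveOne a b i (evalRef a b env r) w
  | .inr ((i, r), (j, r')) => solveTwo a b i j (evalRef a b env r) (evalRef a b env r')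

abbrev Code (ι : Type*) := Fin 2 × ι × ι × Recipe ι × Recipe ι × Recipe ι

/-- Rebuilds `(r₁', s₁')` from `(r₁, s₁)`, then the pair of `h₂` with index `m₀`, then the other
one; each recipe refers only to pairs already rebuilt. -/
noncomputable def decode (P : M × M) (w : M) (c : Code ι) :
    (Fin 2 → M) × (Fin 2 → Fin 2 → M × M) :=
  let (m₀, q₁, q₂, d₁, d₂, d₃) := c
  let Q := solveRecipe a b ![P, P, P] w d₁
  let R := solveRecipe a b ![P, Q, Q] w d₂
  let R' := solveRecipe a b ![P, Q, R] w d₃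
  (![msetElem a b P q₁, msetElem a b R q₂], ![![P, Q], fun m => if m = m₀ then R else R'])

variable {a b}

lemma decode_eq {z : (Fin 2 → M) × (Fin 2 → Fin 2 → M × M)} {w : M} {m₀ : Fin 2}
    {q₁ q₂ : ι} {d₁ d₂ d₃ : Recipe ι}
    (h₁ : solveRecipe a b ![z.2 0 0, z.2 0 0, z.2 0 0] w d₁ = z.2 0 1)
    (h₂ : solveRecipe a b ![z.2 0 0, z.2 0 1, z.2 0 1] w d₂ = z.2 1 m₀)
    (h₃ : solveRecipe a b ![z.2 0 0, z.2 0 1, z.2 1 m₀] w d₃ = z.2 1 (m₀ + 1))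
    (hq₁ : msetElem a b (z.2 0 0) q₁ = z.1 0) (hq₂ : msetElem a b (z.2 1 m₀) q₂ = z.1 1) :
    decode a b (z.2 0 0) w (m₀, q₁, q₂, d₁, d₂, d₃) = z := by
  simp only [decode, h₁, h₂, h₃, hq₁, hq₂]
  refine Prod.ext (funext fun l => ?_) (funext₂ fun l m => ?_)
  · fin_cases l <;> rfl
  · fin_cases l
    · fin_cases m <;> rfl
    · dsimp
      split_ifs with hm
      · rw [hm]
      · rw [show m₀ + 1 = m by revert hm; fin_cases m <;> fin_cases m₀ <;> decide]

end Decode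

section Parity

variable {α : Type*} [DecidableEq α]

lemma symmDiff_eq_of_add_eq_add_self {A B C D : Finset α} {V : Multiset α}
    (h : A.val + B.val + (C.val + D.val) = V + V) : A ∆ B = C ∆ D := by
  ext x
  have hx := congrArg (Multiset.count x) h
  simp only [Multiset.count_add, Multiset.count_eq_of_nodup A.nodup,
    Multiset.count_eq_of_nodup B.nodup, Multiset.count_eq_of_nodup C.nodup,
    Multiset.count_eq_of_nodup D.nodup, Finset.mem_val] at hx
  simp only [Finset.mem_symmDiff]
  split_ifs at hx <;> simp_all <;> omega

lemma card_sdiff_eq_of_card_eq {A B : Finset α} (h : #A = #B) : #(A \ B) = #(B \ A) := by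
  have hA := card_sdiff_add_card_inter A B
  have hB := card_sdiff_add_card_inter B A
  rw [inter_comm] at hB
  omega

lemma card_symmDiff_of_card_eq {A B : Finset α} (h : #A = #B) : #(A ∆ B) = 2 * #(A \ B) := by
  rw [Finset.symmDiff_def, card_union_of_disjoint disjoint_sdiff_sdiff,
    ← card_sdiff_eq_of_card_eq h, two_mul]

lemma two_le_card_inter_or {A B C D : Finset α} {k : ℕ} (hk : 3 ≤ k) (hA : #A = k)
    (hB : #B = k) (hC : #C = k) (hD : #D = k) (h : A ∆ B = C ∆ D) :
    (2 ≤ #(C ∩ (A ∪ B)) ∧ 2 ≤ #(D ∩ (A ∪ B))) ∨ (2 ≤ #(B ∩ A) ∧ 2 ≤ #(C ∩ D)) := by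
  have hAB := card_symmDiff_of_card_eq (hA.trans hB.symm)
  have hCD := card_symmDiff_of_card_eq (hC.trans hD.symm)
  have hDC := card_sdiff_eq_of_card_eq (hC.trans hD.symm)
  have hBA := card_sdiff_add_card_inter B A
  have hCD' := card_sdiff_add_card_inter C D
  have hBA' := card_sdiff_eq_of_card_eq (hA.trans hB.symm)
  rw [h] at hAB
  -- `X \ Y ⊆ X ∆ Y = A ∆ B ⊆ A ∪ B`, so `C` (or `D`) meeting `A ∪ B` at most once forces
  -- `#(A \ B) = #(C \ D) ≤ 1`.
  have hsub : ∀ {X Y : Finset α}, X ∆ Y = A ∆ B → X \ Y ⊆ X ∩ (A ∪ B) := fun hXY x hx =>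
    mem_inter.mpr ⟨(mem_sdiff.mp hx).1,
      symmDiff_subset_union (hXY ▸ symmDiff_subset_sdiff hx)⟩
  have hC' := card_le_card (hsub h.symm)
  have hD' := card_le_card (hsub ((symmDiff_comm D C).trans h.symm))
  omega

end Parity

section AbsVals

variable {p n k : ℕ}

lemma eq_or_eq_neg_of_absLex_eq {u v : Fin n → ZMod p} (h : absLex p n u = absLex p n v) :
    u = v ∨ u = -v := by
  unfold absLex at h
  split_ifs at h
  · exact .inl h
  · exact .inr h
  · exact .inr (neg_eq_iff_eq_neg.mp h)
  · exact .inl (neg_injective h)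

variable (a b : Fin k → ZMod p)

noncomputable def absVals (P : (Fin n → ZMod p) × (Fin n → ZMod p)) : Finset (Fin n → ZMod p) :=
  univ.image fun i => absLex p n (msetElem a b P i)

variable {a b} [Fact p.Prime] (hminors : ∀ i j, i ≠ j → a i * b j - a j * b i ≠ 0)
include hminors

lemma absLex_msetElem_injective {P : (Fin n → ZMod p) × (Fin n → ZMod p)}
    (hP : LinearIndependent (ZMod p) ![P.1, P.2]) :
    Function.Injective fun i => absLex p n (msetElem a b P i) := fun _ _ h =>
  eq_of_msetElem_eq_or_eq_neg hminors hP (eq_or_eq_neg_of_absLex_eq h)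

lemma card_absVals {P : (Fin n → ZMod p) × (Fin n → ZMod p)}
    (hP : LinearIndependent (ZMod p) ![P.1, P.2]) : #(absVals a b P) = k := by
  rw [absVals, card_image_of_injective _ (absLex_msetElem_injective hminors hP), card_fin]

lemma map_absLex_Mset {P : (Fin n → ZMod p) × (Fin n → ZMod p)}
    (hP : LinearIndependent (ZMod p) ![P.1, P.2]) :
    (Mset p n k a b P.1 P.2).map (absLex p n) = (absVals a b P).val := by
  rw [absVals, image_val, Multiset.Nodup.dedup, Mset, Multiset.map_map]
  · rfl
  · exact univ.nodup.map (absLex_msetElem_injective hminors hP)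

end AbsVals

section Reconstruction

variable {p n k : ℕ} {a b : Fin k → ZMod p}

lemma exists_ref_of_mem_absVals {P : (Fin n → ZMod p) × (Fin n → ZMod p)}
    {env : Fin 3 → (Fin n → ZMod p) × (Fin n → ZMod p)} {s : Fin 3} {i : Fin k}
    (h : absLex p n (msetElem a b P i) ∈ absVals a b (env s)) :
    ∃ r : Ref (Fin k), msetElem a b P i = evalRef a b env r := by
  obtain ⟨j, -, hj⟩ := mem_image.mp h
  rcases eq_or_eq_neg_of_absLex_eq hj with h | h
  · exact ⟨(true, s, j), h.symm⟩
  · exact ⟨(false, s, j), (neg_eq_iff_eq_neg.mpr h).symm⟩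

variable [Fact p.Prime]

lemma exists_recipe_of_mem {P : (Fin n → ZMod p) × (Fin n → ZMod p)}
    {env : Fin 3 → (Fin n → ZMod p) × (Fin n → ZMod p)} {s : Fin 3} {i : Fin k}
    (hi : a i ≠ 0 ∨ b i ≠ 0) (h : absLex p n (msetElem a b P i) ∈ absVals a b (env s)) :
    ∃ d w, solveRecipe a b env w d = P := by
  obtain ⟨r, hr⟩ := exists_ref_of_mem_absVals h
  obtain ⟨w, hw⟩ := exists_solveOne_eq hi hr
  exact ⟨.inl (i, r), w, hw⟩

lemma exists_recipe_of_two_le_card (hminors : ∀ i j, i ≠ j → a i * b j - a j * b i ≠ 0)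
    {P : (Fin n → ZMod p) × (Fin n → ZMod p)}
    {env : Fin 3 → (Fin n → ZMod p) × (Fin n → ZMod p)} {T : Finset (Fin n → ZMod p)}
    (hT : T ⊆ univ.biUnion fun s => absVals a b (env s)) (h : 2 ≤ #(absVals a b P ∩ T)) :
    ∃ d, ∀ w, solveRecipe a b env w d = P := by
  obtain ⟨u, hu, v, hv, huv⟩ := one_lt_card.mp h
  obtain ⟨huP, huT⟩ := mem_inter.mp hu
  obtain ⟨hvP, hvT⟩ := mem_inter.mp hv
  obtain ⟨i, -, rfl⟩ := mem_image.mp huP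
  obtain ⟨j, -, rfl⟩ := mem_image.mp hvP
  obtain ⟨s, -, hs⟩ := mem_biUnion.mp (hT huT)
  obtain ⟨s', -, hs'⟩ := mem_biUnion.mp (hT hvT)
  obtain ⟨r, hr⟩ := exists_ref_of_mem_absVals hs
  obtain ⟨r', hr'⟩ := exists_ref_of_mem_absVals hs'
  exact ⟨.inr ((i, r), (j, r')),
    fun _ => solveTwo_eq (hminors i j fun hij => huv (hij ▸ rfl)) hr hr'⟩

variable (hminors : ∀ i j, i ≠ j → a i * b j - a j * b i ≠ 0) (hab : ∀ i, a i ≠ 0 ∨ b i ≠ 0)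
  {z : (Fin 2 → Fin n → ZMod p) × (Fin 2 → Fin 2 → (Fin n → ZMod p) × (Fin n → ZMod p))}
  (hq : ∀ l m, ∃ i, msetElem a b (z.2 l m) i = z.1 l)
include hminors hab hq

lemma exists_decode_eq_of_two_le_card_inter_union
    (hC : ∀ m, 2 ≤ #(absVals a b (z.2 1 m) ∩ (absVals a b (z.2 0 0) ∪ absVals a b (z.2 0 1)))) :
    ∃ P w c, decode a b P w c = z := by
  obtain ⟨q₁, hq₁⟩ := hq 0 0
  obtain ⟨i₁, hi₁⟩ := hq 0 1
  obtain ⟨q₂, hq₂⟩ := hq 1 0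
  obtain ⟨d₁, w, h₁⟩ := exists_recipe_of_mem (env := ![z.2 0 0, z.2 0 0, z.2 0 0]) (s := 0)
    (hab i₁) (by rw [hi₁, ← hq₁]; exact mem_image_of_mem _ (mem_univ q₁))
  have hT : ∀ R, absVals a b (z.2 0 0) ∪ absVals a b (z.2 0 1) ⊆
      univ.biUnion fun s => absVals a b (![z.2 0 0, z.2 0 1, R] s) := fun _ u hu =>
    mem_biUnion.mpr <| (mem_union.mp hu).elim (⟨0, mem_univ _, ·⟩) (⟨1, mem_univ _, ·⟩)
  obtain ⟨d₂, h₂⟩ := exists_recipe_of_two_le_card hminors (hT _) (hC 0)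
  obtain ⟨d₃, h₃⟩ := exists_recipe_of_two_le_card hminors (hT _) (hC 1)
  exact ⟨_, _, _, decode_eq (m₀ := 0) h₁ (h₂ w) (h₃ w) hq₁ hq₂⟩

lemma exists_decode_eq_of_two_le_card_inter {m₀ : Fin 2} {x : Fin n → ZMod p}
    (hxA : x ∈ absVals a b (z.2 0 0) ∪ absVals a b (z.2 0 1))
    (hxC : x ∈ absVals a b (z.2 1 m₀))
    (hBA : 2 ≤ #(absVals a b (z.2 0 1) ∩ absVals a b (z.2 0 0)))
    (hDC : 2 ≤ #(absVals a b (z.2 1 (m₀ + 1)) ∩ absVals a b (z.2 1 m₀))) :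
    ∃ P w c, decode a b P w c = z := by
  obtain ⟨q₁, hq₁⟩ := hq 0 0
  obtain ⟨q₂, hq₂⟩ := hq 1 m₀
  obtain ⟨d₁, h₁⟩ := exists_recipe_of_two_le_card hminors
    (env := ![z.2 0 0, z.2 0 0, z.2 0 0]) (subset_biUnion_of_mem _ (mem_univ (0 : Fin 3))) hBA
  obtain ⟨i₀, -, rfl⟩ := mem_image.mp hxC
  obtain ⟨d₂, w, h₂⟩ :
      ∃ d w, solveRecipe a b ![z.2 0 0, z.2 0 1, z.2 0 1] w d = z.2 1 m₀ := by
    rcases mem_union.mp hxA with h | h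
    · exact exists_recipe_of_mem (s := 0) (hab i₀) h
    · exact exists_recipe_of_mem (s := 1) (hab i₀) h
  obtain ⟨d₃, h₃⟩ := exists_recipe_of_two_le_card hminors
    (env := ![z.2 0 0, z.2 0 1, z.2 1 m₀]) (subset_biUnion_of_mem _ (mem_univ (2 : Fin 3))) hDC
  exact ⟨_, _, _, decode_eq (h₁ w) h₂ (h₃ w) hq₁ hq₂⟩

end Reconstruction

lemma exists_decode_eq {p n k : ℕ} [Fact p.Prime] {a b : Fin k → ZMod p} (hk : 3 ≤ k)
    (hminors : ∀ i j, i ≠ j → a i * b j - a j * b i ≠ 0)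
    {z : (Fin 2 → Fin n → ZMod p) × (Fin 2 → Fin 2 → (Fin n → ZMod p) × (Fin n → ZMod p))}
    (hli : ∀ l m, LinearIndependent (ZMod p) ![(z.2 l m).1, (z.2 l m).2])
    (hmem : ∀ l m, z.1 l ∈ Mset p n k a b (z.2 l m).1 (z.2 l m).2)
    (hx : ∃ x, ∀ l, x ∈ (Mset p n k a b (z.2 l 0).1 (z.2 l 0).2).map (absLex p n) +
      (Mset p n k a b (z.2 l 1).1 (z.2 l 1).2).map (absLex p n))
    (hV : ∃ V, ∑ l : Fin 2, ∑ m : Fin 2,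
      (Mset p n k a b (z.2 l m).1 (z.2 l m).2).map (absLex p n) = V + V) :
    ∃ P w c, decode a b P w c = z := by
  have hab (i : Fin k) : a i ≠ 0 ∨ b i ≠ 0 := by
    obtain ⟨j, hj⟩ := Fintype.exists_ne_of_one_lt_card (by simp; omega) i
    exact ne_zero_or_ne_zero_of_minor_ne_zero (hminors i j hj.symm)
  have hq (l m : Fin 2) : ∃ i, msetElem a b (z.2 l m) i = z.1 l := by
    obtain ⟨i, -, hi⟩ := Multiset.mem_map.mp (hmem l m)
    exact ⟨i, hi⟩
  have hval (l m : Fin 2) := map_absLex_Mset hminors (hli l m)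
  have hcard (l m : Fin 2) := card_absVals hminors (hli l m)
  obtain ⟨x, hx⟩ := hx
  obtain ⟨V, hV⟩ := hV
  simp only [hval, Fin.sum_univ_two, Multiset.mem_add, mem_val, ← mem_union] at hx hV
  rcases two_le_card_inter_or hk (hcard 0 0) (hcard 0 1) (hcard 1 0) (hcard 1 1)
    (symmDiff_eq_of_add_eq_add_self hV) with ⟨hC, hD⟩ | ⟨hBA, hCD⟩
  · exact exists_decode_eq_of_two_le_card_inter_union hminors hab hq
      (Fin.forall_fin_two.mpr ⟨hC, hD⟩)
  · rcases mem_union.mp (hx 1) with hxC | hxD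
    · exact exists_decode_eq_of_two_le_card_inter hminors hab hq (hx 0) hxC hBA
        (by rwa [inter_comm] at hCD)
    · exact exists_decode_eq_of_two_le_card_inter hminors hab hq (hx 0) hxD hBA hCD

theorem stmt19_general (p k : ℕ) [NeZero p] (hp : p.Prime) (hk : 3 ≤ k)
    (a b : Fin k → ZMod p)
    (hminors : ∀ i j : Fin k, i ≠ j → a i * b j - a j * b i ≠ 0) :
    ∃ C : ℝ, ∀ n : ℕ, 1 ≤ n →
      ((Finset.univ.filter
          (fun z : (Fin 2 → (Fin n → ZMod p)) ×
              (Fin 2 → Fin 2 → (Fin n → ZMod p) × (Fin n → ZMod p)) =>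
            (∀ l : Fin 2, posLex p n (z.1 l)) ∧
            z.1 0 ≠ z.1 1 ∧
            (∀ l m : Fin 2, LinearIndependent (ZMod p) ![(z.2 l m).1, (z.2 l m).2]) ∧
            (∀ l m : Fin 2, z.1 l ∈ Mset p n k a b (z.2 l m).1 (z.2 l m).2 ∧
              ∀ h' ∈ Mset p n k a b (z.2 l m).1 (z.2 l m).2,
                lexLe p n (absLex p n h') (z.1 l)) ∧
            (∃ x : Fin n → ZMod p,
              (∀ l : Fin 2, x ∈
                (Mset p n k a b (z.2 l 0).1 (z.2 l 0).2).map (absLex p n) +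
                (Mset p n k a b (z.2 l 1).1 (z.2 l 1).2).map (absLex p n))) ∧
            (∃ V : Multiset (Fin n → ZMod p),
              (∑ l : Fin 2, ∑ m : Fin 2,
                  (Mset p n k a b (z.2 l m).1 (z.2 l m).2).map (absLex p n))
                = V + V))).card : ℝ)
        ≤ C * (p : ℝ) ^ (3 * n) := by
  have := Fact.mk hp
  refine ⟨Fintype.card (Code (Fin k)), fun n _ => ?_⟩
  let Data := ((Fin n → ZMod p) × (Fin n → ZMod p)) × (Fin n → ZMod p) × Code (Fin k)
  calc _ ≤ (#(univ : Finset Data) : ℝ) := by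
        refine Nat.cast_le.mpr (card_le_card_of_surjOn
          (fun t : Data => decode a b t.1 t.2.1 t.2.2) fun z hz => ?_)
        obtain ⟨-, -, -, hli, hmem, hx, hV⟩ := mem_filter.mp hz
        obtain ⟨P, w, c, h⟩ := exists_decode_eq hk hminors hli (fun l m => (hmem l m).1) hx hV
        exact ⟨(P, w, c), mem_coe.mpr (mem_univ _), h⟩
    _ = _ := by
        simp only [Data, card_univ, Fintype.card_prod, Fintype.card_fun, ZMod.card,
          Fintype.card_fin]
        push_cast
        ring

/-- Let `p > 2` be prime, `k ≥ 3`, and `a, b ∈ 𝔽_p^k` with all `2 × 2` minors nonzero.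
There is a constant `C` (depending only on `p, k`) such that for all `n ≥ 1`, the number
of tuples `(h₁, h₂, (r_1,s_1), (r_1',s_1'), (r_2,s_2), (r_2',s_2'))` — with
`0 ≺ h₁ ≠ h₂ ≻ 0`, all four pairs linearly independent, `h_l` belonging to and
`⪰`-maximal (in absolute value) in each of its two multisets, the multisets
`|M(r_1,s_1)| ∪ |M(r_1',s_1')|` and `|M(r_2,s_2)| ∪ |M(r_2',s_2')|` sharing a common
element, and their `4k`-element union partitionable into pairs of equal elements —
is at most `C · p^{3n}`. Here `z.1 l` is `h_{l+1}` and `z.2 l m` is the `m`-th pair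
for `h_{l+1}`. -/
theorem stmt19 (p k : ℕ) [NeZero p] (hp : p.Prime) (hp2 : 2 < p) (hk : 3 ≤ k)
    (a b : Fin k → ZMod p)
    (hminors : ∀ i j : Fin k, i ≠ j → a i * b j - a j * b i ≠ 0) :
    ∃ C : ℝ, ∀ n : ℕ, 1 ≤ n →
      ((Finset.univ.filter
          (fun z : (Fin 2 → (Fin n → ZMod p)) ×
              (Fin 2 → Fin 2 → (Fin n → ZMod p) × (Fin n → ZMod p)) =>
            (∀ l : Fin 2, posLex p n (z.1 l)) ∧
            z.1 0 ≠ z.1 1 ∧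
            (∀ l m : Fin 2, LinearIndependent (ZMod p) ![(z.2 l m).1, (z.2 l m).2]) ∧
            (∀ l m : Fin 2, z.1 l ∈ Mset p n k a b (z.2 l m).1 (z.2 l m).2 ∧
              ∀ h' ∈ Mset p n k a b (z.2 l m).1 (z.2 l m).2,
                lexLe p n (absLex p n h') (z.1 l)) ∧
            (∃ x : Fin n → ZMod p,
              (∀ l : Fin 2, x ∈
                (Mset p n k a b (z.2 l 0).1 (z.2 l 0).2).map (absLex p n) +
                (Mset p n k a b (z.2 l 1).1 (z.2 l 1).2).map (absLex p n))) ∧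
            (∃ V : Multiset (Fin n → ZMod p),
              (∑ l : Fin 2, ∑ m : Fin 2,
                  (Mset p n k a b (z.2 l m).1 (z.2 l m).2).map (absLex p n))
                = V + V))).card : ℝ)
        ≤ C * (p : ℝ) ^ (3 * n) :=
  stmt19_general p k hp hk a b hminors
end
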